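/- arXiv:2402.08759 — 9 statements merged into one kernel-verified Lean document; each statement's English description precedes it below -/
import Mathlib

section
/- Let b ∈ ℝ. For every x ∈ ℝ with x ≠ 0, the peakon profile satisfies the traveling-wave identity −φ'(x) + φ(x)²·φ'(x) + (1/2)·(φ' ∗ ( ((6−b)/2)·φ·(φ')² + (b/3)·φ³ ))(x) + ((b−2)/4)·(φ ∗ (φ')³)(x) = 0. -/
open MeasureTheory Complex

/-- The peakon profile `φ(x) = exp(-|x|)`. -/
noncomputable def phi (x : ℝ) : ℝ := Real.exp (-|x|)

/-- The piecewise derivative of the peakon profile, `φ'(x) = -sgn(x)·exp(-|x|)`. -/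
noncomputable def phi' (x : ℝ) : ℝ := -Real.sign x * Real.exp (-|x|)

/-- Convolution of real-valued functions on `ℝ`. -/
noncomputable def conv (f g : ℝ → ℝ) (x : ℝ) : ℝ := ∫ y : ℝ, f (x - y) * g y

open Set

section Helpers

lemma exp_cube (t : ℝ) : Real.exp t ^ 3 = Real.exp (3*t) := by
  rw [show (3:ℝ) = ((3:ℕ):ℝ) by norm_num, Real.exp_nat_mul]

lemma intOn_exp_neg4_Ioi (a : ℝ) : IntegrableOn (fun y : ℝ => Real.exp (-4*y)) (Ioi a) :=
  exp_neg_integrableOn_Ioi a (by norm_num)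

lemma int_exp_neg4_Ioi (a : ℝ) : ∫ y in Ioi a, Real.exp (-4*y) = Real.exp (-4*a)/4 := by
  have hd : ∀ y ∈ Ici a, HasDerivAt (fun t : ℝ => -Real.exp (-4*t)/4) (Real.exp (-4*y)) y := by
    intro y _
    have h : HasDerivAt (fun t : ℝ => -4*t) (-4) y := by
      simpa using (hasDerivAt_id y).const_mul (-4)
    have := (h.exp).neg.div_const (4:ℝ)
    refine this.congr_deriv ?_
    ring
  have ht : Filter.Tendsto (fun t : ℝ => -Real.exp (-4*t)/4) Filter.atTop (nhds 0) := by
    have h1 : Filter.Tendsto (fun t : ℝ => (4:ℝ)*t) Filter.atTop Filter.atTop :=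
      Filter.Tendsto.const_mul_atTop (by norm_num) Filter.tendsto_id
    have h2 : Filter.Tendsto (fun t : ℝ => Real.exp (-4*t)) Filter.atTop (nhds 0) := by
      have h3 := Real.tendsto_exp_neg_atTop_nhds_zero.comp h1
      have he : (fun t : ℝ => Real.exp (-4*t)) = (fun x : ℝ => Real.exp (-x)) ∘ (fun t : ℝ => (4:ℝ)*t) := by
        funext t; simp [Function.comp, neg_mul]
      rw [he]; exact h3
    simpa using (h2.neg).div_const (4:ℝ)
  have := MeasureTheory.integral_Ioi_of_hasDerivAt_of_tendsto'
    (fun y hy => hd y hy) (intOn_exp_neg4_Ioi a) ht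
  rw [this]; ring

lemma int_exp_4_Iic : ∫ y in Iic (0:ℝ), Real.exp (4*y) = 1/4 := by
  have h : (fun y : ℝ => Real.exp (4*y)) = fun y : ℝ => Real.exp (-4 * (-y)) := by
    funext y; ring_nf
  rw [h, integral_comp_neg_Iic 0 (fun u : ℝ => Real.exp (-4*u))]
  simpa using int_exp_neg4_Ioi 0

lemma intOn_exp_4_Iic : IntegrableOn (fun y : ℝ => Real.exp (4*y)) (Iic (0:ℝ)) := by
  have h := (measurableEmbedding_neg (α := ℝ)).integrableOn_map_iff
    (f := fun y : ℝ => Real.exp (4*y)) (μ := volume) (s := Iic (0:ℝ))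
  rw [Measure.map_neg_eq_self] at h
  rw [h]
  have h1 : (Neg.neg ⁻¹' (Iic (0:ℝ))) = Ici 0 := by ext t; simp
  have h2 : ((fun y : ℝ => Real.exp (4*y)) ∘ Neg.neg) = fun y : ℝ => Real.exp (-4*y) := by
    funext y; simp [Function.comp, neg_mul]
  rw [h1, h2, integrableOn_Ici_iff_integrableOn_Ioi]
  exact intOn_exp_neg4_Ioi 0

lemma int_exp_neg2_Ioc (x : ℝ) (hx : 0 ≤ x) :
    ∫ y in Ioc (0:ℝ) x, Real.exp (-2*y) = (1 - Real.exp (-2*x))/2 := by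
  rw [← intervalIntegral.integral_of_le hx]
  have hd : ∀ y ∈ uIcc (0:ℝ) x, HasDerivAt (fun t : ℝ => -Real.exp (-2*t)/2) (Real.exp (-2*y)) y := by
    intro y _
    have h : HasDerivAt (fun t : ℝ => -2*t) (-2) y := by
      simpa using (hasDerivAt_id y).const_mul (-2)
    have := (h.exp).neg.div_const (2:ℝ)
    refine this.congr_deriv ?_
    ring
  rw [intervalIntegral.integral_eq_sub_of_hasDerivAt hd
    ((Real.continuous_exp.comp (continuous_const.mul continuous_id)).intervalIntegrable 0 x)]
  norm_num
  ring

lemma ae_ne (a : ℝ) : ∀ᵐ y : ℝ, y ≠ a := by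
  have h : volume ({a} : Set ℝ) = 0 := measure_singleton a
  have := measure_eq_zero_iff_ae_notMem.mp h
  simpa using this

lemma split_integral {F g1 g2 g3 : ℝ → ℝ} {x : ℝ} (hx : 0 < x)
    (e1 : ∀ y, y < 0 → F y = g1 y) (e2 : ∀ y, 0 < y → y < x → F y = g2 y)
    (e3 : ∀ y, x < y → F y = g3 y)
    (i1 : IntegrableOn g1 (Iic 0)) (i2 : IntegrableOn g2 (Ioc 0 x))
    (i3 : IntegrableOn g3 (Ioi x)) :
    ∫ y, F y = (∫ y in Iic (0:ℝ), g1 y) + (∫ y in Ioc (0:ℝ) x, g2 y) + (∫ y in Ioi x, g3 y) := by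
  have m1 : F =ᵐ[volume.restrict (Iic (0:ℝ))] g1 := by
    refine (ae_restrict_iff' measurableSet_Iic).2 ?_
    filter_upwards [ae_ne 0] with y hy hmem
    exact e1 y (lt_of_le_of_ne hmem hy)
  have m2 : F =ᵐ[volume.restrict (Ioc (0:ℝ) x)] g2 := by
    refine (ae_restrict_iff' measurableSet_Ioc).2 ?_
    filter_upwards [ae_ne x] with y hy hmem
    exact e2 y hmem.1 (lt_of_le_of_ne hmem.2 hy)
  have m3 : F =ᵐ[volume.restrict (Ioi x)] g3 := by
    refine (ae_restrict_iff' measurableSet_Ioi).2 ?_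
    filter_upwards with y hmem
    exact e3 y hmem
  have I1 : IntegrableOn F (Iic 0) := i1.congr m1.symm
  have I2 : IntegrableOn F (Ioc 0 x) := i2.congr m2.symm
  have I3 : IntegrableOn F (Ioi x) := i3.congr m3.symm
  have I23 : IntegrableOn F (Ioi 0) := by
    have := I2.union I3
    rwa [Ioc_union_Ioi_eq_Ioi hx.le] at this
  have s1 : ∫ y, F y = (∫ y in Iic (0:ℝ), F y) + ∫ y in Ioi (0:ℝ), F y := by
    rw [← setIntegral_union (Iic_disjoint_Ioi le_rfl) measurableSet_Ioi I1 I23,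
      Iic_union_Ioi, setIntegral_univ]
  have s2 : ∫ y in Ioi (0:ℝ), F y = (∫ y in Ioc (0:ℝ) x, F y) + ∫ y in Ioi x, F y := by
    rw [← setIntegral_union (Ioc_disjoint_Ioi le_rfl) measurableSet_Ioi I2 I3,
      Ioc_union_Ioi_eq_Ioi hx.le]
  rw [s1, s2, integral_congr_ae m1, integral_congr_ae m2, integral_congr_ae m3, add_assoc]

lemma phi_neg (t : ℝ) : phi (-t) = phi t := by rw [phi, phi, abs_neg]

lemma phi'_neg (t : ℝ) : phi' (-t) = -phi' t := by
  rw [phi', phi', Real.sign_neg, abs_neg]; ring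

/-- Value of the first convolution integral for `x > 0`. -/
lemma conv1_val (x : ℝ) (hx : 0 < x) :
    (∫ y : ℝ, phi' (x - y) * phi y ^ 3)
      = (3/4) * (Real.exp (-(3*x)) - Real.exp (-x)) := by
  have e1 : ∀ y : ℝ, y < 0 → phi' (x - y) * phi y ^ 3 = -Real.exp (-x) * Real.exp (4*y) := by
    intro y hy
    rw [phi', phi, Real.sign_of_pos (by linarith), abs_of_pos (by linarith), abs_of_neg hy]
    rw [exp_cube]
    simp only [neg_one_mul, neg_mul, neg_neg, ← Real.exp_add]
    congr 2
    rw [one_mul, ← Real.exp_add]; congr 1; ring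
  have e2 : ∀ y : ℝ, 0 < y → y < x → phi' (x - y) * phi y ^ 3 = -Real.exp (-x) * Real.exp (-2*y) := by
    intro y h0 h1
    rw [phi', phi, Real.sign_of_pos (by linarith), abs_of_pos (by linarith), abs_of_pos h0]
    rw [exp_cube]
    simp only [neg_one_mul, neg_mul, neg_neg, ← Real.exp_add]
    congr 2
    rw [one_mul, ← Real.exp_add]; congr 1; ring
  have e3 : ∀ y : ℝ, x < y → phi' (x - y) * phi y ^ 3 = Real.exp x * Real.exp (-4*y) := by
    intro y h1
    rw [phi', phi, Real.sign_of_neg (by linarith), abs_of_neg (by linarith),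
      abs_of_pos (by linarith)]
    rw [exp_cube]
    simp only [neg_one_mul, neg_mul, neg_neg, ← Real.exp_add]
    rw [one_mul, ← Real.exp_add]; congr 1; ring
  rw [split_integral hx e1 e2 e3 (intOn_exp_4_Iic.const_mul _)
    ((continuous_const.mul (Real.continuous_exp.comp (continuous_const.mul continuous_id))).integrableOn_Ioc)
    ((intOn_exp_neg4_Ioi x).const_mul _),
    integral_const_mul, integral_const_mul, integral_const_mul,
    int_exp_4_Iic, int_exp_neg2_Ioc x hx.le, int_exp_neg4_Ioi x]
  have h1 : Real.exp (-x) * Real.exp (-2*x) = Real.exp (-(3*x)) := by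
    rw [← Real.exp_add]; congr 1; ring
  have h2 : Real.exp x * Real.exp (-4*x) = Real.exp (-(3*x)) := by
    rw [← Real.exp_add]; congr 1; ring
  linear_combination (1/2) * h1 + (1/4) * h2

/-- Value of the second convolution integral for `x > 0`. -/
lemma conv2_val (x : ℝ) (hx : 0 < x) :
    (∫ y : ℝ, phi (x - y) * phi' y ^ 3)
      = (1/4) * (Real.exp (-(3*x)) - Real.exp (-x)) := by
  have e1 : ∀ y : ℝ, y < 0 → phi (x - y) * phi' y ^ 3 = Real.exp (-x) * Real.exp (4*y) := by
    intro y hy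
    rw [phi, phi', Real.sign_of_neg hy, abs_of_pos (by linarith), abs_of_neg hy]
    rw [show (- -1 : ℝ) * Real.exp (- -y) = Real.exp (- -y) by ring, exp_cube]
    rw [← Real.exp_add, ← Real.exp_add]; congr 1; ring
  have e2 : ∀ y : ℝ, 0 < y → y < x → phi (x - y) * phi' y ^ 3 = -Real.exp (-x) * Real.exp (-2*y) := by
    intro y h0 h1
    rw [phi, phi', Real.sign_of_pos h0, abs_of_pos (by linarith), abs_of_pos h0]
    rw [show (-1 : ℝ) * Real.exp (-y) = -Real.exp (-y) by ring,
      Odd.neg_pow (Nat.odd_iff.mpr rfl), exp_cube]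
    rw [mul_neg, ← Real.exp_add, neg_mul, ← Real.exp_add]; congr 2; ring
  have e3 : ∀ y : ℝ, x < y → phi (x - y) * phi' y ^ 3 = -Real.exp x * Real.exp (-4*y) := by
    intro y h1
    rw [phi, phi', Real.sign_of_pos (by linarith), abs_of_neg (by linarith),
      abs_of_pos (by linarith)]
    rw [show (-1 : ℝ) * Real.exp (-y) = -Real.exp (-y) by ring,
      Odd.neg_pow (Nat.odd_iff.mpr rfl), exp_cube]
    rw [mul_neg, ← Real.exp_add, neg_mul, ← Real.exp_add]; congr 2; ring
  rw [split_integral hx e1 e2 e3 (intOn_exp_4_Iic.const_mul _)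
    ((continuous_const.mul (Real.continuous_exp.comp (continuous_const.mul continuous_id))).integrableOn_Ioc)
    ((intOn_exp_neg4_Ioi x).const_mul _),
    integral_const_mul, integral_const_mul, integral_const_mul,
    int_exp_4_Iic, int_exp_neg2_Ioc x hx.le, int_exp_neg4_Ioi x]
  have h1 : Real.exp (-x) * Real.exp (-2*x) = Real.exp (-(3*x)) := by
    rw [← Real.exp_add]; congr 1; ring
  have h2 : Real.exp x * Real.exp (-4*x) = Real.exp (-(3*x)) := by
    rw [← Real.exp_add]; congr 1; ring
  linear_combination (1/2) * h1 - (1/4) * h2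

/-- Oddness of `conv phi' g` for even `g`. -/
lemma conv_phi'_even (g : ℝ → ℝ) (hg : ∀ y, g (-y) = g y) (z : ℝ) :
    conv phi' g (-z) = -(conv phi' g z) := by
  rw [conv, conv]
  have h1 : (∫ y : ℝ, phi' (-z - y) * g y)
      = ∫ y : ℝ, (fun u : ℝ => phi' (-z + u) * g (-u)) (-y) := by
    congr 1; funext y
    show phi' (-z - y) * g y = phi' (-z + -y) * g (- -y)
    rw [show -z + -y = -z - y by ring, neg_neg]
  rw [h1, integral_neg_eq_self (fun u : ℝ => phi' (-z + u) * g (-u))]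
  have h2 : (∫ u : ℝ, phi' (-z + u) * g (-u)) = ∫ u : ℝ, -(phi' (z - u) * g u) := by
    congr 1; funext u
    rw [show -z + u = -(z - u) by ring, phi'_neg, hg]; ring
  rw [h2, integral_neg]

/-- Oddness of `conv phi g` for odd `g`. -/
lemma conv_phi_odd (g : ℝ → ℝ) (hg : ∀ y, g (-y) = -g y) (z : ℝ) :
    conv phi g (-z) = -(conv phi g z) := by
  rw [conv, conv]
  have h1 : (∫ y : ℝ, phi (-z - y) * g y)
      = ∫ y : ℝ, (fun u : ℝ => phi (-z + u) * g (-u)) (-y) := by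
    congr 1; funext y
    show phi (-z - y) * g y = phi (-z + -y) * g (- -y)
    rw [show -z + -y = -z - y by ring, neg_neg]
  rw [h1, integral_neg_eq_self (fun u : ℝ => phi (-z + u) * g (-u))]
  have h2 : (∫ u : ℝ, phi (-z + u) * g (-u)) = ∫ u : ℝ, -(phi (z - u) * g u) := by
    congr 1; funext u
    rw [show -z + u = -(z - u) by ring, phi_neg, hg]; ring
  rw [h2, integral_neg]

end Helpers

/-- the peakon profile satisfies the traveling-wave integral identity
`-φ' + φ²φ' + ½ φ' ∗ ((6-b)/2 · φ(φ')² + b/3 · φ³) + (b-2)/4 · φ ∗ (φ')³ = 0`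
for every `x ≠ 0` and every real parameter `b`. -/
theorem peakon_traveling_wave_identity (b : ℝ) :
    ∀ x : ℝ, x ≠ 0 →
      -phi' x + (phi x) ^ 2 * phi' x
        + (1 / 2) * conv phi'
            (fun y => ((6 - b) / 2) * phi y * (phi' y) ^ 2 + (b / 3) * (phi y) ^ 3) x
        + ((b - 2) / 4) * conv phi (fun y => (phi' y) ^ 3) x = 0 := by
  set inner : ℝ → ℝ :=
    fun y => ((6 - b) / 2) * phi y * (phi' y) ^ 2 + (b / 3) * (phi y) ^ 3 with hinner
  have sq_eq : ∀ y : ℝ, y ≠ 0 → (phi' y) ^ 2 = (phi y) ^ 2 := by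
    intro y hy
    rcases lt_or_gt_of_ne hy with h | h
    · rw [phi', phi, Real.sign_of_neg h]; ring
    · rw [phi', phi, Real.sign_of_pos h]; ring
  have conv1_eq : ∀ z : ℝ, conv phi' inner z
      = ((18 - b)/6) * ∫ y : ℝ, phi' (z - y) * phi y ^ 3 := by
    intro z
    rw [conv]
    have hea : (fun y : ℝ => phi' (z - y) * inner y)
        =ᵐ[volume] fun y : ℝ => ((18 - b)/6) * (phi' (z - y) * phi y ^ 3) := by
      filter_upwards [ae_ne 0] with y hy
      rw [hinner]
      simp only
      rw [sq_eq y hy]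
      ring
    rw [integral_congr_ae hea, integral_const_mul]
  have main : ∀ z : ℝ, 0 < z →
      -phi' z + (phi z) ^ 2 * phi' z
        + (1 / 2) * conv phi' inner z
        + ((b - 2) / 4) * conv phi (fun y => (phi' y) ^ 3) z = 0 := by
    intro z hz
    rw [conv1_eq z, conv1_val z hz, show conv phi (fun y => (phi' y) ^ 3) z
        = ∫ y : ℝ, phi (z - y) * phi' y ^ 3 from rfl, conv2_val z hz]
    rw [phi', phi, Real.sign_of_pos hz, abs_of_pos hz]
    rw [show (-(3*z) : ℝ) = 3 * (-z) by ring, ← exp_cube]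
    ring
  intro x hx
  rcases lt_or_gt_of_ne hx with hneg | hpos
  · have hz : 0 < -x := by linarith
    have hmain := main (-x) hz
    have hge : ∀ y : ℝ, inner (-y) = inner y := by
      intro y
      rw [hinner]
      simp only
      rw [phi_neg, phi'_neg]
      ring
    have hgo : ∀ y : ℝ, (fun y : ℝ => (phi' y) ^ 3) (-y) = -((fun y : ℝ => (phi' y) ^ 3) y) := by
      intro y
      simp only
      rw [phi'_neg]
      ring
    rw [phi_neg, phi'_neg, conv_phi'_even inner hge x, conv_phi_odd _ hgo x] at hmain
    linear_combination -hmain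
  · exact main x hpos
end

section
/- For every ξ ∈ ℝ with ξ ≠ 0, (φ' ∗ φ³)(ξ) + (φ ∗ (φ²·φ'))(ξ) = (1 − φ(ξ)²)·φ'(ξ). -/
open MeasureTheory Complex

open Real Set

lemma measurable_sign' : Measurable Real.sign := by
  unfold Real.sign
  refine Measurable.ite ?_ measurable_const (Measurable.ite ?_ measurable_const measurable_const)
  · exact measurableSet_lt measurable_id measurable_const
  · exact measurableSet_lt measurable_const measurable_id

lemma continuous_phi : Continuous phi := (_root_.continuous_abs.neg).rexp

lemma measurable_phi' : Measurable phi' :=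
  (measurable_sign'.neg).mul (_root_.continuous_abs.neg.rexp.measurable)

lemma integrable_expabs : Integrable (fun y : ℝ => Real.exp (-(3 * |y|))) := by
  have h1 : IntegrableOn (fun y : ℝ => Real.exp (-(3 * |y|))) (Ioi 0) := by
    refine (exp_neg_integrableOn_Ioi 0 (by norm_num : (0:ℝ) < 3)).congr_fun ?_ measurableSet_Ioi
    intro y hy
    rw [mem_Ioi] at hy
    simp only []
    rw [abs_of_pos hy, neg_mul]
  have h2 : IntegrableOn (fun y : ℝ => Real.exp (-(3 * |y|))) (Iic 0) := by
    rw [← Measure.map_neg_eq_self (volume : Measure ℝ)]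
    let m : MeasurableEmbedding fun x : ℝ => -x := (Homeomorph.neg ℝ).measurableEmbedding
    rw [m.integrableOn_map_iff]
    simp_rw [Function.comp_def, abs_neg, neg_preimage, neg_Iic, neg_zero]
    exact Iff.mpr integrableOn_Ici_iff_integrableOn_Ioi h1
  have := h2.union h1
  rwa [Iic_union_Ioi, integrableOn_univ] at this

lemma abs_sign_le (x : ℝ) : |Real.sign x| ≤ 1 := by
  rcases lt_trichotomy x 0 with h | h | h
  · rw [Real.sign_of_neg h]; norm_num
  · rw [h, Real.sign_zero]; norm_num
  · rw [Real.sign_of_pos h]; norm_num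

lemma abs_phi'_le (x : ℝ) : |phi' x| ≤ 1 := by
  unfold phi'
  rw [abs_mul, abs_neg]
  calc |Real.sign x| * |Real.exp (-|x|)| ≤ 1 * 1 := by
        apply mul_le_mul (abs_sign_le x) ?_ (abs_nonneg _) (by norm_num)
        rw [abs_of_pos (Real.exp_pos _)]
        exact Real.exp_le_one_iff.mpr (neg_nonpos.mpr (abs_nonneg _))
    _ = 1 := by norm_num

lemma abs_phi_le (x : ℝ) : |phi x| ≤ 1 := by
  unfold phi
  rw [abs_of_pos (Real.exp_pos _)]
  exact Real.exp_le_one_iff.mpr (neg_nonpos.mpr (abs_nonneg _))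

lemma phi_pow3 (y : ℝ) : phi y ^ 3 = Real.exp (-(3 * |y|)) := by
  unfold phi
  rw [← Real.exp_nat_mul]
  push_cast
  ring_nf

lemma integrable_f1 (ξ : ℝ) : Integrable (fun y => phi' (ξ - y) * phi y ^ 3) := by
  refine Integrable.mono' integrable_expabs ?_ (Filter.Eventually.of_forall fun y => ?_)
  · exact ((measurable_phi'.comp (measurable_const.sub measurable_id)).mul
      ((continuous_phi.measurable).pow measurable_const)).aestronglyMeasurable
  · rw [Real.norm_eq_abs, abs_mul, phi_pow3]
    calc |phi' (ξ - y)| * |Real.exp (-(3 * |y|))|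
        ≤ 1 * Real.exp (-(3 * |y|)) := by
          rw [abs_of_pos (Real.exp_pos _)]
          exact mul_le_mul_of_nonneg_right (abs_phi'_le _) (Real.exp_pos _).le
      _ = _ := one_mul _

lemma integrable_f2 (ξ : ℝ) : Integrable (fun y => phi (ξ - y) * (phi y ^ 2 * phi' y)) := by
  refine Integrable.mono' integrable_expabs ?_ (Filter.Eventually.of_forall fun y => ?_)
  · exact ((continuous_phi.measurable.comp (measurable_const.sub measurable_id)).mul
      (((continuous_phi.measurable).pow measurable_const).mul measurable_phi')).aestronglyMeasurable
  · rw [Real.norm_eq_abs, abs_mul, abs_mul]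
    have key : |phi y ^ 2| * |phi' y| = Real.exp (-(3 * |y|)) * |Real.sign y| := by
      unfold phi phi'
      rw [abs_mul, abs_neg, _root_.abs_pow, abs_of_pos (Real.exp_pos _),
        show -(3 * |y|) = -|y| + (-|y| + -|y|) by ring, Real.exp_add, Real.exp_add]
      ring
    rw [key, ← mul_assoc]
    calc |phi (ξ - y)| * Real.exp (-(3 * |y|)) * |Real.sign y|
        ≤ 1 * Real.exp (-(3 * |y|)) * 1 := by
          apply mul_le_mul ?_ (abs_sign_le y) (abs_nonneg _) (by positivity)
          exact mul_le_mul_of_nonneg_right (abs_phi_le _) (Real.exp_pos _).le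
      _ = _ := by ring

/-- for every `ξ ≠ 0`, `(φ' ∗ φ³)(ξ) + (φ ∗ (φ²φ'))(ξ) = (1 - φ(ξ)²)·φ'(ξ)`. -/
theorem conv_identity_Q_phi :
    ∀ ξ : ℝ, ξ ≠ 0 →
      conv phi' (fun y => (phi y) ^ 3) ξ + conv phi (fun y => (phi y) ^ 2 * phi' y) ξ
        = (1 - (phi ξ) ^ 2) * phi' ξ := by
  intro ξ hξ
  rw [conv, conv, ← integral_add (integrable_f1 ξ) (integrable_f2 ξ)]
  have hae0 : ∀ᵐ y : ℝ, y ∉ ({0, ξ} : Set ℝ) := by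
    rw [ae_iff]
    have : {a : ℝ | ¬ a ∉ ({0, ξ} : Set ℝ)} = {0, ξ} := by
      ext a; simp only [Set.mem_setOf_eq, not_not]
    rw [this]
    exact ((Set.finite_singleton ξ).insert 0).countable.measure_zero _
  rcases hξ.lt_or_gt with hneg | hpos
  · -- ξ < 0
    have hae : (fun y => phi' (ξ - y) * phi y ^ 3 + phi (ξ - y) * (phi y ^ 2 * phi' y))
        =ᵐ[volume] (Ioo ξ 0).indicator (fun y => 2 * Real.exp (ξ + 2 * y)) := by
      filter_upwards [hae0] with y hy
      simp only [Set.mem_insert_iff, Set.mem_singleton_iff, not_or] at hy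
      obtain ⟨hy0, hyξ⟩ := hy
      rcases lt_trichotomy y 0 with h0 | h0 | h0
      · rcases lt_trichotomy y ξ with h1 | h1 | h1
        · -- y < ξ < 0 : outside
          rw [Set.indicator_of_notMem (by simp [Set.mem_Ioo]; intro h; exact absurd h (not_lt.mpr h1.le))]
          unfold phi phi'
          have hxy : 0 < ξ - y := by linarith
          rw [Real.sign_of_pos hxy, Real.sign_of_neg h0, abs_of_pos hxy, abs_of_neg h0]
          ring
        · exact absurd h1 hyξ
        · -- ξ < y < 0 : inside
          rw [Set.indicator_of_mem (Set.mem_Ioo.mpr ⟨h1, h0⟩)]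
          unfold phi phi'
          have hxy : ξ - y < 0 := by linarith
          rw [Real.sign_of_neg hxy, Real.sign_of_neg h0, abs_of_neg hxy, abs_of_neg h0]
          rw [show ξ + 2 * y = -(-(ξ - y)) + (-(-y) + (-(-y) + -(-y))) by ring,
            Real.exp_add, Real.exp_add, Real.exp_add]
          ring
      · exact absurd h0 hy0
      · -- y > 0 : outside
        rw [Set.indicator_of_notMem (by simp [Set.mem_Ioo]; intro h; linarith)]
        unfold phi phi'
        have hxy : ξ - y < 0 := by linarith
        rw [Real.sign_of_neg hxy, Real.sign_of_pos h0, abs_of_neg hxy, abs_of_pos h0]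
        ring
    rw [integral_congr_ae hae, integral_indicator measurableSet_Ioo,
      ← integral_Ioc_eq_integral_Ioo, ← intervalIntegral.integral_of_le hneg.le]
    have hF : ∀ x ∈ Set.uIcc ξ (0:ℝ), HasDerivAt (fun y => Real.exp (ξ + 2 * y))
        (2 * Real.exp (ξ + 2 * x)) x := by
      intro x _
      have h1 : HasDerivAt (fun y : ℝ => ξ + 2 * y) 2 x := by
        exact ((hasDerivAt_const x ξ).add ((hasDerivAt_id x).const_mul 2)).congr_deriv (by ring)
      have := h1.exp
      convert this using 1
      ring
    have hcont : IntervalIntegrable (fun y => 2 * Real.exp (ξ + 2 * y)) volume ξ 0 :=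
      (continuous_const.mul ((continuous_const.add (continuous_const.mul continuous_id)).rexp)).intervalIntegrable _ _
    rw [intervalIntegral.integral_eq_sub_of_hasDerivAt hF hcont]
    unfold phi phi'
    rw [Real.sign_of_neg hneg, abs_of_neg hneg]
    rw [show ξ + 2 * 0 = -(-ξ) by ring, show ξ + 2 * ξ = -(-ξ) + (-(-ξ) + -(-ξ)) by ring,
      Real.exp_add, Real.exp_add]
    ring
  · -- 0 < ξ
    have hae : (fun y => phi' (ξ - y) * phi y ^ 3 + phi (ξ - y) * (phi y ^ 2 * phi' y))
        =ᵐ[volume] (Ioo 0 ξ).indicator (fun y => -2 * Real.exp (-ξ + -2 * y)) := by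
      filter_upwards [hae0] with y hy
      simp only [Set.mem_insert_iff, Set.mem_singleton_iff, not_or] at hy
      obtain ⟨hy0, hyξ⟩ := hy
      rcases lt_trichotomy y 0 with h0 | h0 | h0
      · -- y < 0 : outside
        rw [Set.indicator_of_notMem (by simp [Set.mem_Ioo]; intro h; linarith)]
        unfold phi phi'
        have hxy : 0 < ξ - y := by linarith
        rw [Real.sign_of_pos hxy, Real.sign_of_neg h0, abs_of_pos hxy, abs_of_neg h0]
        ring
      · exact absurd h0 hy0
      · rcases lt_trichotomy y ξ with h1 | h1 | h1
        · -- 0 < y < ξ : inside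
          rw [Set.indicator_of_mem (Set.mem_Ioo.mpr ⟨h0, h1⟩)]
          unfold phi phi'
          have hxy : 0 < ξ - y := by linarith
          rw [Real.sign_of_pos hxy, Real.sign_of_pos h0, abs_of_pos hxy, abs_of_pos h0]
          rw [show -ξ + -2 * y = -(ξ - y) + (-y + (-y + -y)) by ring,
            Real.exp_add, Real.exp_add, Real.exp_add]
          ring
        · exact absurd h1 hyξ
        · -- ξ < y : outside
          rw [Set.indicator_of_notMem (by simp [Set.mem_Ioo]; intro h; linarith)]
          unfold phi phi'
          have hxy : ξ - y < 0 := by linarith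
          rw [Real.sign_of_neg hxy, Real.sign_of_pos h0, abs_of_neg hxy, abs_of_pos h0]
          ring
    rw [integral_congr_ae hae, integral_indicator measurableSet_Ioo,
      ← integral_Ioc_eq_integral_Ioo, ← intervalIntegral.integral_of_le hpos.le]
    have hF : ∀ x ∈ Set.uIcc (0:ℝ) ξ, HasDerivAt (fun y => Real.exp (-ξ + -2 * y))
        (-2 * Real.exp (-ξ + -2 * x)) x := by
      intro x _
      have h1 : HasDerivAt (fun y : ℝ => -ξ + -2 * y) (-2) x := by
        exact ((hasDerivAt_const x (-ξ)).add ((hasDerivAt_id x).const_mul (-2))).congr_deriv (by ring)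
      have := h1.exp
      convert this using 1
      ring
    have hcont : IntervalIntegrable (fun y => -2 * Real.exp (-ξ + -2 * y)) volume 0 ξ :=
      (continuous_const.mul ((continuous_const.add (continuous_const.mul continuous_id)).rexp)).intervalIntegrable _ _
    rw [intervalIntegral.integral_eq_sub_of_hasDerivAt hF hcont]
    unfold phi phi'
    rw [Real.sign_of_pos hpos, abs_of_pos hpos]
    rw [show -ξ + -2 * 0 = -ξ by ring, show -ξ + -2 * ξ = -ξ + (-ξ + -ξ) by ring,
      Real.exp_add, Real.exp_add]
    ring
end

section
/- Let b ∈ ℝ, λ ∈ ℂ, and v₊, v₋ ∈ ℂ. Define v : ℝ∖{0} → ℂ by v(ξ) = v₊·(e^{2ξ}−1)^{λ/2}·(1−e^{−2ξ})^{2−b/2} for ξ > 0 and v(ξ) = v₋·e^{λξ}·(1−e^{2ξ})^{2−(λ+b)/2} for ξ < 0, where complex powers of the positive real bases are taken via the principal branch. Then v is differentiable on ℝ∖{0} and satisfies (1 − φ(ξ)²)·v'(ξ) + (4−b)·φ(ξ)·φ'(ξ)·v(ξ) = λ·v(ξ) for every ξ ≠ 0. -/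
open MeasureTheory Complex

theorem cpow_comp_real {f : ℝ → ℂ} {f' : ℂ} {x : ℝ} (c : ℂ) (hf : HasDerivAt f f' x)
    (h : f x ∈ Complex.slitPlane) :
    HasDerivAt (fun t => f t ^ c) (c * f x ^ (c - 1) * f') x := by
  have := HasDerivAt.comp (h₂ := fun z : ℂ => z ^ c) (h := f) (x := x)
    (Complex.hasStrictDerivAt_cpow_const (c := c) h).hasDerivAt hf
  exact this

/-- the piecewise-defined function `v` solves the first-order equation
`(1-φ²)v' + (4-b)φφ'v = λv` on `ℝ ∖ {0}`. -/
theorem general_solution_L0 (b : ℝ) (lam vp vm : ℂ) (v : ℝ → ℂ)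
    (hv : ∀ ξ : ℝ, v ξ =
      if 0 < ξ then
        vp * ((Real.exp (2 * ξ) - 1 : ℝ) : ℂ) ^ (lam / 2)
          * ((1 - Real.exp (-(2 * ξ)) : ℝ) : ℂ) ^ ((2 : ℂ) - (b : ℂ) / 2)
      else
        vm * Complex.exp (lam * ξ)
          * ((1 - Real.exp (2 * ξ) : ℝ) : ℂ) ^ ((2 : ℂ) - (lam + (b : ℂ)) / 2)) :
    ∀ ξ : ℝ, ξ ≠ 0 →
      DifferentiableAt ℝ v ξ ∧
      (1 - ((phi ξ : ℝ) : ℂ) ^ 2) * deriv v ξ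
          + (((4 - b) * phi ξ * phi' ξ : ℝ) : ℂ) * v ξ = lam * v ξ := by
  intro ξ hξ
  rcases lt_or_gt_of_ne hξ with hneg | hpos
  case inl =>
    set c : ℂ := (2 : ℂ) - (lam + (b : ℂ)) / 2 with hc
    have hBpos : (0:ℝ) < 1 - Real.exp (2 * ξ) :=
      sub_pos.2 (Real.exp_lt_one_iff.2 (by linarith))
    set w : ℝ → ℂ := fun t =>
      vm * Complex.exp (lam * t) * ((1 - Real.exp (2 * t) : ℝ) : ℂ) ^ c with hw
    -- derivative of the exponential factor
    have hX : HasDerivAt (fun t : ℝ => Complex.exp (lam * t)) (Complex.exp (lam * ξ) * lam) ξ := by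
      have h1 : HasDerivAt (fun t : ℝ => ((t : ℝ) : ℂ)) 1 ξ := by
        simpa using (hasDerivAt_id ξ).ofReal_comp
      simpa using (h1.const_mul lam).cexp
    -- derivative of the base of the power
    have hg : HasDerivAt (fun t : ℝ => ((1 - Real.exp (2 * t) : ℝ) : ℂ))
        ((-(Real.exp (2 * ξ) * 2) : ℝ) : ℂ) ξ := by
      have : HasDerivAt (fun t : ℝ => 1 - Real.exp (2 * t)) (-(Real.exp (2 * ξ) * 2)) ξ := by
        simpa using (((hasDerivAt_id ξ).const_mul (2:ℝ)).exp).const_sub 1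
      exact this.ofReal_comp
    have hslit : ((1 - Real.exp (2 * ξ) : ℝ) : ℂ) ∈ Complex.slitPlane :=
      Complex.ofReal_mem_slitPlane.2 hBpos
    have hQ := cpow_comp_real c hg hslit
    have hwD : HasDerivAt w
        ((vm * (Complex.exp (lam * ξ) * lam)) * ((1 - Real.exp (2 * ξ) : ℝ) : ℂ) ^ c
          + (vm * Complex.exp (lam * ξ))
            * (c * ((1 - Real.exp (2 * ξ) : ℝ) : ℂ) ^ (c - 1) * ((-(Real.exp (2 * ξ) * 2) : ℝ) : ℂ))) ξ := by
      simpa [hw, mul_assoc, Pi.mul_def] using (hX.const_mul vm).mul hQ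
    have heq : v =ᶠ[nhds ξ] w := by
      refine Filter.eventuallyEq_of_mem (Iio_mem_nhds hneg) (fun t ht => ?_)
      rw [hv t, if_neg (not_lt.2 (le_of_lt ht))]
    have hd := hwD.congr_of_eventuallyEq heq
    refine ⟨hd.differentiableAt, ?_⟩
    rw [hd.deriv, hv ξ, if_neg (not_lt.2 (le_of_lt hneg))]
    -- unfold phi, phi'
    rw [phi, phi', abs_of_neg hneg, Real.sign_of_neg hneg, neg_neg]
    have hB0 : ((1 - Real.exp (2 * ξ) : ℝ) : ℂ) ≠ 0 := by exact_mod_cast ne_of_gt hBpos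
    have hcpow : ((1 - Real.exp (2 * ξ) : ℝ) : ℂ) ^ (c - 1)
        = ((1 - Real.exp (2 * ξ) : ℝ) : ℂ) ^ c / ((1 - Real.exp (2 * ξ) : ℝ) : ℂ) := by
      rw [Complex.cpow_sub _ _ hB0, Complex.cpow_one]
    rw [hcpow]
    have h2 : Real.exp (2 * ξ) = Real.exp ξ * Real.exp ξ := by
      rw [← Real.exp_add]; ring_nf
    rw [h2] at hB0 ⊢
    push_cast at hB0 ⊢
    field_simp [hB0]
    have hinv : (1 - Complex.exp (ξ:ℂ) ^ 2) * (1 - Complex.exp (ξ:ℂ) ^ 2)⁻¹ = 1 :=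
      mul_inv_cancel₀ (by rwa [sq])
    linear_combination (-2 * vm * Complex.exp (ξ:ℂ) ^ 2 * (1 - Complex.exp (ξ:ℂ) ^ 2) ^ c) * hc
      + (-2 * vm * Complex.exp (ξ:ℂ) ^ 2 * (1 - Complex.exp (ξ:ℂ) ^ 2) ^ c * c) * hinv

  case inr =>
    set c : ℂ := (2 : ℂ) - (b : ℂ) / 2 with hc
    have hE1 : (1:ℝ) < Real.exp (2 * ξ) := by
      rw [← Real.exp_zero]; exact Real.exp_lt_exp.2 (by linarith)
    have hApos : (0:ℝ) < Real.exp (2 * ξ) - 1 := by linarith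
    have hBpos : (0:ℝ) < 1 - Real.exp (-(2 * ξ)) :=
      sub_pos.2 (Real.exp_lt_one_iff.2 (by linarith))
    set w : ℝ → ℂ := fun t =>
      vp * ((Real.exp (2 * t) - 1 : ℝ) : ℂ) ^ (lam / 2)
        * ((1 - Real.exp (-(2 * t)) : ℝ) : ℂ) ^ c with hw
    have hgA : HasDerivAt (fun t : ℝ => ((Real.exp (2 * t) - 1 : ℝ) : ℂ))
        ((Real.exp (2 * ξ) * 2 : ℝ) : ℂ) ξ := by
      have : HasDerivAt (fun t : ℝ => Real.exp (2 * t) - 1) (Real.exp (2 * ξ) * 2) ξ := by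
        simpa using (((hasDerivAt_id ξ).const_mul (2:ℝ)).exp).sub_const 1
      exact this.ofReal_comp
    have hgB : HasDerivAt (fun t : ℝ => ((1 - Real.exp (-(2 * t)) : ℝ) : ℂ))
        ((Real.exp (-(2 * ξ)) * 2 : ℝ) : ℂ) ξ := by
      have : HasDerivAt (fun t : ℝ => 1 - Real.exp (-(2 * t))) (Real.exp (-(2 * ξ)) * 2) ξ := by
        have h0 : HasDerivAt (fun t : ℝ => -(2 * t)) (-2 : ℝ) ξ := by
          simpa [Pi.neg_def] using ((hasDerivAt_id ξ).const_mul (2:ℝ)).neg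
        have := (h0.exp).const_sub 1
        simpa using this.congr_deriv (by ring)
      exact this.ofReal_comp
    have hP := cpow_comp_real (lam / 2) hgA (Complex.ofReal_mem_slitPlane.2 hApos)
    have hQ := cpow_comp_real c hgB (Complex.ofReal_mem_slitPlane.2 hBpos)
    have hwD : HasDerivAt w
        ((vp * (lam / 2 * ((Real.exp (2 * ξ) - 1 : ℝ) : ℂ) ^ (lam / 2 - 1)
            * ((Real.exp (2 * ξ) * 2 : ℝ) : ℂ)))
          * ((1 - Real.exp (-(2 * ξ)) : ℝ) : ℂ) ^ c
          + (vp * ((Real.exp (2 * ξ) - 1 : ℝ) : ℂ) ^ (lam / 2))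
            * (c * ((1 - Real.exp (-(2 * ξ)) : ℝ) : ℂ) ^ (c - 1)
              * ((Real.exp (-(2 * ξ)) * 2 : ℝ) : ℂ))) ξ := by
      simpa [hw, mul_assoc, Pi.mul_def] using (hP.const_mul vp).mul hQ
    have heq : v =ᶠ[nhds ξ] w := by
      refine Filter.eventuallyEq_of_mem (Ioi_mem_nhds hpos) (fun t ht => ?_)
      rw [hv t, if_pos (Set.mem_Ioi.1 ht)]
    have hd := hwD.congr_of_eventuallyEq heq
    refine ⟨hd.differentiableAt, ?_⟩
    rw [hd.deriv, hv ξ, if_pos hpos]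
    rw [phi, phi', abs_of_pos hpos, Real.sign_of_pos hpos]
    have hA0 : ((Real.exp (2 * ξ) - 1 : ℝ) : ℂ) ≠ 0 := by exact_mod_cast ne_of_gt hApos
    have hB0 : ((1 - Real.exp (-(2 * ξ)) : ℝ) : ℂ) ≠ 0 := by exact_mod_cast ne_of_gt hBpos
    have hcpA : ((Real.exp (2 * ξ) - 1 : ℝ) : ℂ) ^ (lam / 2 - 1)
        = ((Real.exp (2 * ξ) - 1 : ℝ) : ℂ) ^ (lam / 2) / ((Real.exp (2 * ξ) - 1 : ℝ) : ℂ) := by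
      rw [Complex.cpow_sub _ _ hA0, Complex.cpow_one]
    have hcpB : ((1 - Real.exp (-(2 * ξ)) : ℝ) : ℂ) ^ (c - 1)
        = ((1 - Real.exp (-(2 * ξ)) : ℝ) : ℂ) ^ c / ((1 - Real.exp (-(2 * ξ)) : ℝ) : ℂ) := by
      rw [Complex.cpow_sub _ _ hB0, Complex.cpow_one]
    rw [hcpA, hcpB]
    have h1 : Real.exp (-(2 * ξ)) = (Real.exp (2 * ξ))⁻¹ := Real.exp_neg _
    have h2 : Real.exp (-ξ) * Real.exp (-ξ) = (Real.exp (2 * ξ))⁻¹ := by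
      rw [← Real.exp_add, ← Real.exp_neg]; ring_nf
    have h3 : (4 - b) * Real.exp (-ξ) * (-1 * Real.exp (-ξ))
        = -(4 - b) * (Real.exp (2 * ξ))⁻¹ := by rw [← h2]; ring
    set EC : ℂ := ((Real.exp (2 * ξ) : ℝ) : ℂ) with hEC
    have hE0 : EC ≠ 0 := by
      rw [hEC]; exact_mod_cast (Real.exp_pos _).ne'
    have e1 : ((Real.exp (2 * ξ) * 2 : ℝ) : ℂ) = 2 * EC := by
      rw [Complex.ofReal_mul, Complex.ofReal_ofNat, hEC]; ring
    have e2 : ((Real.exp (-(2 * ξ)) * 2 : ℝ) : ℂ) = 2 * EC⁻¹ := by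
      rw [h1, Complex.ofReal_mul, Complex.ofReal_inv, Complex.ofReal_ofNat, hEC]; ring
    have e3 : (((Real.exp (-ξ) : ℝ) : ℂ)) ^ 2 = EC⁻¹ := by
      rw [sq, ← Complex.ofReal_mul, h2, Complex.ofReal_inv, hEC]
    have e4 : (((4 - b) * Real.exp (-ξ) * (-1 * Real.exp (-ξ)) : ℝ) : ℂ)
        = -((4 : ℂ) - (b : ℂ)) * EC⁻¹ := by
      rw [h3, Complex.ofReal_mul, Complex.ofReal_inv, Complex.ofReal_neg, Complex.ofReal_sub,
        Complex.ofReal_ofNat, hEC]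
    have hABreal : Real.exp (2 * ξ) - 1 = Real.exp (2 * ξ) * (1 - Real.exp (-(2 * ξ))) := by
      rw [mul_sub, mul_one, ← Real.exp_add, add_neg_cancel, Real.exp_zero]
    have hABC : ((Real.exp (2 * ξ) - 1 : ℝ) : ℂ)
        = EC * ((1 - Real.exp (-(2 * ξ)) : ℝ) : ℂ) := by
      rw [hABreal, Complex.ofReal_mul, hEC]
    rw [e1, e2, e3, e4, hABC]
    have hBE : ((1 - Real.exp (-(2 * ξ)) : ℝ) : ℂ) = 1 - EC⁻¹ := by
      rw [h1, Complex.ofReal_sub, Complex.ofReal_inv, Complex.ofReal_one, hEC]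
    have hB0' : (1 : ℂ) - EC⁻¹ ≠ 0 := hBE ▸ hB0
    rw [hBE, hc]
    have hiB : (1 - EC⁻¹) * (1 - EC⁻¹)⁻¹ = 1 := mul_inv_cancel₀ hB0'
    have hiEB : (EC * (1 - EC⁻¹)) * (EC * (1 - EC⁻¹))⁻¹ = 1 :=
      mul_inv_cancel₀ (mul_ne_zero hE0 hB0')
    linear_combination
      (vp * lam * ((EC * (1 - EC⁻¹)) ^ (lam / 2)) * ((1 - EC⁻¹) ^ ((2 : ℂ) - (b : ℂ) / 2))) * hiEB
        + (vp * ((EC * (1 - EC⁻¹)) ^ (lam / 2)) * ((1 - EC⁻¹) ^ ((2 : ℂ) - (b : ℂ) / 2))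
            * ((4 : ℂ) - (b : ℂ)) * EC⁻¹) * hiB
end

section
/- Let b ∈ ℝ and λ ∈ ℂ. The function v : (−∞,0) → ℂ defined by v(ξ) = e^{λξ}·(1−e^{2ξ})^{2−(λ+b)/2} (principal branch of complex powers of a base in (0,1)) is square-integrable on (−∞,0) if and only if 0 < Re λ and Re λ < 5 − b. -/
set_option maxHeartbeats 1000000

open MeasureTheory Set

private lemma aux_rpow_le_max {c d x : ℝ} (hc : 0 < c) (hcx : c ≤ x) (hxd : x ≤ d) (p : ℝ) :
    x ^ p ≤ max (c ^ p) (d ^ p) := by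
  rcases le_or_gt 0 p with hp | hp
  · exact le_max_of_le_right (Real.rpow_le_rpow (hc.le.trans hcx) hxd hp)
  · exact le_max_of_le_left (Real.rpow_le_rpow_of_nonpos hc hcx hp.le)

private lemma aux_min_le_rpow {c d x : ℝ} (hc : 0 < c) (hcx : c ≤ x) (hxd : x ≤ d) (p : ℝ) :
    min (c ^ p) (d ^ p) ≤ x ^ p := by
  rcases le_or_gt 0 p with hp | hp
  · exact min_le_of_left_le (Real.rpow_le_rpow hc.le hcx hp)
  · exact min_le_of_right_le (Real.rpow_le_rpow_of_nonpos (hc.trans_le hcx) hxd hp.le)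

private lemma aux_comp_neg_iff (f : ℝ → ℝ) (s : Set ℝ) :
    IntegrableOn (fun x => f (-x)) (Neg.neg ⁻¹' s) volume ↔ IntegrableOn f s volume :=
  MeasurePreserving.integrableOn_comp_preimage (Measure.measurePreserving_neg _)
    (Homeomorph.neg ℝ).measurableEmbedding

private lemma aux_exp_Iio {c : ℝ} (hc : 0 < c) (d : ℝ) :
    IntegrableOn (fun ξ => Real.exp (c * ξ)) (Iio d) volume := by
  have h := exp_neg_integrableOn_Ioi (-d) hc
  have h2 : (Neg.neg ⁻¹' (Iio d) : Set ℝ) = Ioi (-d) := by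
    ext x; simp [neg_lt]
  rw [← aux_comp_neg_iff (fun ξ => Real.exp (c * ξ)) (Iio d), h2]
  have h3 : (fun x : ℝ => Real.exp (c * -x)) = fun x : ℝ => Real.exp (-c * x) := by
    funext x; ring_nf
  simpa [h3] using h

private lemma aux_neg_rpow_iff (p : ℝ) :
    IntegrableOn (fun ξ => (-ξ) ^ p) (Ioo (-1 : ℝ) 0) volume ↔ -1 < p := by
  rw [← aux_comp_neg_iff (fun ξ => (-ξ) ^ p) (Ioo (-1) 0)]
  have h2 : (Neg.neg ⁻¹' (Ioo (-1 : ℝ) 0) : Set ℝ) = Ioo 0 1 := by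
    ext x
    simp only [mem_preimage, mem_Ioo]
    constructor <;> intro h <;> constructor <;> linarith [h.1, h.2]
  rw [h2]
  simp only [neg_neg]
  exact intervalIntegral.integrableOn_Ioo_rpow_iff zero_lt_one

/-- `v(ξ) = e^{λξ}·(1-e^{2ξ})^{2-(λ+b)/2}` is square-integrable on `(-∞,0)`
if and only if `0 < Re λ < 5 - b`. -/
theorem L2_criterion_Iio (b : ℝ) (lam : ℂ) (v : ℝ → ℂ)
    (hv : ∀ ξ : ℝ, v ξ = Complex.exp (lam * ξ)
        * ((1 - Real.exp (2 * ξ) : ℝ) : ℂ) ^ ((2 : ℂ) - (lam + (b : ℂ)) / 2)) :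
    MemLp v 2 ((volume : Measure ℝ).restrict (Set.Iio 0)) ↔
      0 < lam.re ∧ lam.re < 5 - b := by
  set a := lam.re with ha
  set p : ℝ := 4 - a - b with hp
  set g : ℝ → ℝ := fun ξ => Real.exp (2 * a * ξ) * (1 - Real.exp (2 * ξ)) ^ p with hgdef
  have hr_pos : ∀ ξ : ℝ, ξ < 0 → 0 < 1 - Real.exp (2 * ξ) := by
    intro ξ hξ
    have h : Real.exp (2 * ξ) < Real.exp 0 := Real.exp_lt_exp.2 (by linarith)
    rw [Real.exp_zero] at h; linarith
  have hg_pos : ∀ ξ : ℝ, ξ < 0 → 0 < g ξ :=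
    fun ξ hξ => mul_pos (Real.exp_pos _) (Real.rpow_pos_of_pos (hr_pos ξ hξ) p)
  have hg_cont : ContinuousOn g (Iio 0) := by
    intro ξ hξ
    have hr := hr_pos ξ hξ
    apply ContinuousAt.continuousWithinAt
    apply ContinuousAt.mul
    · exact (Real.continuous_exp.comp (continuous_const.mul continuous_id)).continuousAt
    · exact ((by fun_prop : Continuous fun ξ : ℝ => 1 - Real.exp (2 * ξ)).continuousAt).rpow_const
        (Or.inl hr.ne')
  -- measurability of v
  have hv_eq : v = fun ξ : ℝ => Complex.exp (lam * ξ)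
      * ((1 - Real.exp (2 * ξ) : ℝ) : ℂ) ^ ((2 : ℂ) - (lam + (b : ℂ)) / 2) := funext hv
  have hv_meas : AEStronglyMeasurable v ((volume : Measure ℝ).restrict (Iio 0)) := by
    rw [hv_eq]
    refine ContinuousOn.aestronglyMeasurable ?_ measurableSet_Iio
    intro ξ hξ
    apply ContinuousAt.continuousWithinAt
    apply ContinuousAt.mul
    · exact (Complex.continuous_exp.comp (continuous_const.mul Complex.continuous_ofReal)).continuousAt
    · exact ContinuousAt.cpow
        (Complex.continuous_ofReal.comp
          (by fun_prop : Continuous fun ξ : ℝ => 1 - Real.exp (2 * ξ))).continuousAt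
        continuousAt_const (Complex.ofReal_mem_slitPlane.2 (hr_pos ξ hξ))
  -- norm computation
  have hnorm : ∀ ξ ∈ Iio (0:ℝ), ‖v ξ‖ ^ 2 = g ξ := by
    intro ξ hξ
    have hr := hr_pos ξ hξ
    rw [hv ξ, norm_mul, Complex.norm_exp,
      Complex.norm_cpow_eq_rpow_re_of_pos hr]
    have h1 : (lam * (ξ : ℂ)).re = a * ξ := by simp [Complex.mul_re, ha]
    have h2 : ((2 : ℂ) - (lam + (b : ℂ)) / 2).re = 2 - (a + b) / 2 := by
      simp [Complex.div_re, Complex.normSq, ha]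
    rw [h1, h2, mul_pow, sq (Real.exp (a * ξ)), ← Real.exp_add,
      sq ((1 - Real.exp (2 * ξ)) ^ (2 - (a + b) / 2)), ← Real.rpow_add hr]
    have e1 : a * ξ + a * ξ = 2 * a * ξ := by ring
    have e2 : 2 - (a + b) / 2 + (2 - (a + b) / 2) = p := by rw [hp]; ring
    rw [e1, e2]
  rw [memLp_two_iff_integrable_sq_norm hv_meas]
  have hcongr : (fun ξ => ‖v ξ‖ ^ 2) =ᵐ[(volume : Measure ℝ).restrict (Iio 0)] g := by
    filter_upwards [ae_restrict_mem measurableSet_Iio] with ξ hξ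
    exact hnorm ξ hξ
  rw [integrable_congr hcongr]
  have hsplit : IntegrableOn g (Iio (0:ℝ)) volume ↔
      IntegrableOn g (Iio (-1:ℝ)) volume ∧ IntegrableOn g (Ioo (-1:ℝ) 0) volume := by
    rw [← Iio_union_Ico_eq_Iio (by norm_num : (-1:ℝ) ≤ 0), integrableOn_union,
      integrableOn_Ico_iff_integrableOn_Ioo]
  have hc0 : 0 < 1 - Real.exp (-2 : ℝ) := by
    have h : Real.exp (-2 : ℝ) < Real.exp 0 := Real.exp_lt_exp.2 (by norm_num)
    rw [Real.exp_zero] at h; linarith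
  -- Piece 1
  have piece1 : IntegrableOn g (Iio (-1:ℝ)) volume ↔ 0 < a := by
    constructor
    · intro h
      by_contra hna
      push_neg at hna
      set m : ℝ := min ((1 - Real.exp (-2 : ℝ)) ^ p) 1 with hm
      have hm0 : 0 < m := lt_min (Real.rpow_pos_of_pos hc0 p) one_pos
      have hbound : ∀ ξ ∈ Iio (-1:ℝ), m ≤ g ξ := by
        intro ξ hξ
        simp only [mem_Iio] at hξ
        have hξ0 : ξ < 0 := by linarith
        have hr := hr_pos ξ hξ0
        have hrlb : 1 - Real.exp (-2 : ℝ) ≤ 1 - Real.exp (2 * ξ) := by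
          have : Real.exp (2 * ξ) ≤ Real.exp (-2 : ℝ) := Real.exp_le_exp.2 (by linarith)
          linarith
        have hrub : 1 - Real.exp (2 * ξ) ≤ 1 := by
          have := Real.exp_pos (2 * ξ); linarith
        have h1 : m ≤ (1 - Real.exp (2 * ξ)) ^ p := by
          have h := aux_min_le_rpow hc0 hrlb hrub p
          rw [Real.one_rpow] at h
          exact h
        have h2 : (1:ℝ) ≤ Real.exp (2 * a * ξ) := by
          apply Real.one_le_exp
          nlinarith
        calc m ≤ (1 - Real.exp (2 * ξ)) ^ p := h1
          _ = 1 * (1 - Real.exp (2 * ξ)) ^ p := (one_mul _).symm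
          _ ≤ Real.exp (2 * a * ξ) * (1 - Real.exp (2 * ξ)) ^ p :=
            mul_le_mul_of_nonneg_right h2 (Real.rpow_nonneg hr.le p)
      have hconst : IntegrableOn (fun _ : ℝ => m) (Iio (-1:ℝ)) volume := by
        apply Integrable.mono' h aestronglyMeasurable_const
        filter_upwards [ae_restrict_mem measurableSet_Iio] with ξ hξ
        rw [Real.norm_eq_abs, abs_of_pos hm0]
        exact hbound ξ hξ
      rw [integrableOn_const_iff (C := m)] at hconst
      rcases hconst with h' | h'
      · exact hm0.ne' (enorm_eq_zero.1 h')
      · rw [Real.volume_Iio] at h'; exact (lt_irrefl _ h')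
    · intro hapos
      set M : ℝ := max ((1 - Real.exp (-2 : ℝ)) ^ p) 1 with hM
      have hint : Integrable (fun ξ => M * Real.exp (2 * a * ξ))
          ((volume : Measure ℝ).restrict (Iio (-1:ℝ))) :=
        (aux_exp_Iio (by linarith : (0:ℝ) < 2 * a) (-1)).const_mul M
      apply Integrable.mono' hint
      · exact ((hg_cont.mono (Iio_subset_Iio (by norm_num))).aestronglyMeasurable
          measurableSet_Iio)
      · filter_upwards [ae_restrict_mem measurableSet_Iio] with ξ hξ
        simp only [mem_Iio] at hξ
        have hξ0 : ξ < 0 := by linarith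
        have hr := hr_pos ξ hξ0
        rw [Real.norm_eq_abs, abs_of_pos (hg_pos ξ hξ0)]
        have hrlb : 1 - Real.exp (-2 : ℝ) ≤ 1 - Real.exp (2 * ξ) := by
          have : Real.exp (2 * ξ) ≤ Real.exp (-2 : ℝ) := Real.exp_le_exp.2 (by linarith)
          linarith
        have hrub : 1 - Real.exp (2 * ξ) ≤ 1 := by
          have := Real.exp_pos (2 * ξ); linarith
        have h1 : (1 - Real.exp (2 * ξ)) ^ p ≤ M := by
          have h := aux_rpow_le_max hc0 hrlb hrub p
          rw [Real.one_rpow] at h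
          exact h
        calc g ξ = Real.exp (2 * a * ξ) * (1 - Real.exp (2 * ξ)) ^ p := rfl
          _ ≤ Real.exp (2 * a * ξ) * M :=
            mul_le_mul_of_nonneg_left h1 (Real.exp_pos _).le
          _ = M * Real.exp (2 * a * ξ) := mul_comm _ _
  -- Piece 2
  set K : ℝ := max ((2/3 : ℝ) ^ p) ((2 : ℝ) ^ p) with hK
  set k : ℝ := min ((2/3 : ℝ) ^ p) ((2 : ℝ) ^ p) with hk
  have hK0 : 0 < K := lt_max_of_lt_left (Real.rpow_pos_of_pos (by norm_num) p)
  have hk0 : 0 < k := lt_min (Real.rpow_pos_of_pos (by norm_num) p)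
    (Real.rpow_pos_of_pos (by norm_num) p)
  set E : ℝ := Real.exp (2 * |a|) with hE
  set e : ℝ := Real.exp (-(2 * |a|)) with he
  have hcore : ∀ ξ ∈ Ioo (-1:ℝ) 0,
      (e * k) * (-ξ) ^ p ≤ g ξ ∧ g ξ ≤ (E * K) * (-ξ) ^ p := by
    intro ξ hξ
    obtain ⟨hξ1, hξ0⟩ := hξ
    have ht0 : 0 < -ξ := by linarith
    have hr := hr_pos ξ hξ0
    -- exponential bounds
    have habs : |2 * a * ξ| ≤ 2 * |a| := by
      rw [abs_mul, abs_mul, abs_two]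
      have h1 : |ξ| ≤ 1 := abs_le.2 ⟨by linarith, by linarith⟩
      nlinarith [abs_nonneg a]
    obtain ⟨habs1, habs2⟩ := abs_le.1 habs
    have hexp_lb : e ≤ Real.exp (2 * a * ξ) := Real.exp_le_exp.2 habs1
    have hexp_ub : Real.exp (2 * a * ξ) ≤ E := Real.exp_le_exp.2 habs2
    -- r bounds
    have hrub : 1 - Real.exp (2 * ξ) ≤ 2 * (-ξ) := by
      have := Real.add_one_le_exp (2 * ξ); linarith
    have hrlb : (2/3) * (-ξ) ≤ 1 - Real.exp (2 * ξ) := by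
      have h1 : 1 + (-(2 * ξ)) ≤ Real.exp (-(2 * ξ)) := by
        have := Real.add_one_le_exp (-(2 * ξ)); linarith
      have h2 : Real.exp (2 * ξ) * (1 - 2 * ξ) ≤ 1 := by
        have h3 : Real.exp (2 * ξ) * (1 + -(2 * ξ)) ≤ Real.exp (2 * ξ) * Real.exp (-(2 * ξ)) :=
          mul_le_mul_of_nonneg_left h1 (Real.exp_pos _).le
        rw [← Real.exp_add] at h3
        simp only [add_neg_cancel, Real.exp_zero] at h3
        linarith
      nlinarith [Real.exp_pos (2 * ξ),
        mul_nonneg (by linarith : (0:ℝ) ≤ -ξ) (by linarith : (0:ℝ) ≤ 1 + ξ)]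
    have hclb : 0 < (2/3) * (-ξ) := by positivity
    -- rpow bounds
    have hrp_ub : (1 - Real.exp (2 * ξ)) ^ p ≤ K * (-ξ) ^ p := by
      have h := aux_rpow_le_max hclb hrlb hrub p
      rw [Real.mul_rpow (by norm_num) ht0.le, Real.mul_rpow (by norm_num) ht0.le] at h
      rwa [hK, max_mul_of_nonneg _ _ (Real.rpow_nonneg ht0.le p)]
    have hrp_lb : k * (-ξ) ^ p ≤ (1 - Real.exp (2 * ξ)) ^ p := by
      have h := aux_min_le_rpow hclb hrlb hrub p
      rw [Real.mul_rpow (by norm_num) ht0.le, Real.mul_rpow (by norm_num) ht0.le] at h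
      rwa [hk, min_mul_of_nonneg _ _ (Real.rpow_nonneg ht0.le p)]
    constructor
    · calc (e * k) * (-ξ) ^ p = e * (k * (-ξ) ^ p) := by ring
        _ ≤ Real.exp (2 * a * ξ) * ((1 - Real.exp (2 * ξ)) ^ p) :=
          mul_le_mul hexp_lb hrp_lb (by positivity) (Real.exp_pos _).le
        _ = g ξ := rfl
    · calc g ξ = Real.exp (2 * a * ξ) * ((1 - Real.exp (2 * ξ)) ^ p) := rfl
        _ ≤ E * (K * (-ξ) ^ p) :=
          mul_le_mul hexp_ub hrp_ub (Real.rpow_nonneg hr.le p) (by positivity)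
        _ = (E * K) * (-ξ) ^ p := by ring
  have hrpow_cont : ContinuousOn (fun ξ : ℝ => (-ξ) ^ p) (Ioo (-1:ℝ) 0) := by
    intro ξ hξ
    apply ContinuousAt.continuousWithinAt
    exact (Real.continuousAt_rpow_const (-ξ) p
      (Or.inl (by simp only [ne_eq, neg_eq_zero]; exact ne_of_lt hξ.2))).comp
      continuous_neg.continuousAt
  have piece2 : IntegrableOn g (Ioo (-1:ℝ) 0) volume ↔ -1 < p := by
    constructor
    · intro h
      rw [← aux_neg_rpow_iff p]
      apply Integrable.mono' (h.const_mul ((e * k)⁻¹))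
      · exact hrpow_cont.aestronglyMeasurable measurableSet_Ioo
      · filter_upwards [ae_restrict_mem measurableSet_Ioo] with ξ hξ
        have ht0 : 0 < -ξ := by linarith [hξ.2]
        rw [Real.norm_eq_abs, abs_of_pos (Real.rpow_pos_of_pos ht0 p)]
        have hek : 0 < e * k := by positivity
        calc (-ξ) ^ p = (e * k)⁻¹ * ((e * k) * (-ξ) ^ p) := by
              rw [← mul_assoc, inv_mul_cancel₀ hek.ne', one_mul]
          _ ≤ (e * k)⁻¹ * g ξ :=
              mul_le_mul_of_nonneg_left (hcore ξ hξ).1 (by positivity)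
    · intro hp'
      apply Integrable.mono' (((aux_neg_rpow_iff p).2 hp').const_mul (E * K))
      · exact (hg_cont.mono (fun x hx => hx.2)).aestronglyMeasurable measurableSet_Ioo
      · filter_upwards [ae_restrict_mem measurableSet_Ioo] with ξ hξ
        rw [Real.norm_eq_abs, abs_of_pos (hg_pos ξ hξ.2)]
        exact (hcore ξ hξ).2
  rw [show (Integrable g ((volume : Measure ℝ).restrict (Iio 0)) ↔
      IntegrableOn g (Iio (0:ℝ)) volume) from Iff.rfl, hsplit, piece1, piece2]
  constructor
  · rintro ⟨h1, h2⟩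
    exact ⟨h1, by rw [hp] at h2; linarith⟩
  · rintro ⟨h1, h2⟩
    exact ⟨h1, by rw [hp]; linarith⟩
end

section
/- Let b ∈ ℝ, λ ∈ ℂ, and v₊, v₋ ∈ ℂ. Define v : ℝ∖{0} → ℂ by v(ξ) = v₊·e^{−λξ}·(1−e^{−2ξ})^{(b−λ)/2−3} for ξ > 0 and v(ξ) = v₋·e^{−λξ}·(1−e^{2ξ})^{(b+λ)/2−3} for ξ < 0, with complex powers of positive real bases via the principal branch. Then v is differentiable on ℝ∖{0} and satisfies −(1 − φ(ξ)²)·v'(ξ) + (6−b)·φ(ξ)·φ'(ξ)·v(ξ) = λ·v(ξ) for every ξ ≠ 0. (This is the eigenvalue equation for the formal adjoint L₀* = −(1−φ²)∂_ξ + (6−b)φφ' of the local part of the linearized operator.) -/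
open MeasureTheory Complex

/-- Derivative of one side of the piecewise solution. -/
lemma side_hasDerivAt (c lam s : ℂ) (e ξ : ℝ) (h : Real.exp (e * ξ) < 1) :
    HasDerivAt (fun x : ℝ => c * Complex.exp (-(lam * x))
        * ((1 - Real.exp (e * x) : ℝ) : ℂ) ^ s)
      (c * (Complex.exp (-(lam * ξ)) * -lam)
          * ((1 - Real.exp (e * ξ) : ℝ) : ℂ) ^ s
        + c * Complex.exp (-(lam * ξ))
          * (s * ((1 - Real.exp (e * ξ) : ℝ) : ℂ) ^ (s - 1)
              * ((-(e * Real.exp (e * ξ)) : ℝ) : ℂ))) ξ := by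
  have hid : HasDerivAt (fun x : ℝ => (x : ℂ)) 1 ξ := by
    have := Complex.ofRealCLM.hasDerivAt (x := ξ); simp at this; exact this
  have hE : HasDerivAt (fun x : ℝ => Complex.exp (-(lam * x)))
      (Complex.exp (-(lam * ξ)) * -lam) ξ := by
    have h1 : HasDerivAt (fun x : ℝ => -(lam * (x : ℂ))) (-lam) ξ := by
      have := (hid.const_mul lam).neg; simp at this; exact this
    simpa using h1.cexp
  have hr : HasDerivAt (fun x : ℝ => ((1 - Real.exp (e * x) : ℝ) : ℂ))
      ((-(e * Real.exp (e * ξ)) : ℝ) : ℂ) ξ := by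
    have h2 : HasDerivAt (fun x : ℝ => 1 - Real.exp (e * x))
        (-(e * Real.exp (e * ξ))) ξ := by
      have h3 : HasDerivAt (fun x : ℝ => e * x) e ξ := by
        simpa using (hasDerivAt_id ξ).const_mul e
      have := (h3.exp).const_sub 1
      simpa [mul_comm] using this
    exact h2.ofReal_comp
  have hslit : ((1 - Real.exp (e * ξ) : ℝ) : ℂ) ∈ Complex.slitPlane := by
    refine Or.inl ?_
    simp only [Complex.ofReal_re]
    linarith
  have hP : HasDerivAt (fun x : ℝ => ((1 - Real.exp (e * x) : ℝ) : ℂ) ^ s)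
      (s * ((1 - Real.exp (e * ξ) : ℝ) : ℂ) ^ (s - 1)
        * ((-(e * Real.exp (e * ξ)) : ℝ) : ℂ)) ξ := by
    have := ((Complex.hasStrictDerivAt_cpow_const (c := s) hslit).hasDerivAt).comp ξ hr
    simp [Function.comp] at this ⊢; exact this
  exact (hE.const_mul c).mul hP

/-- the piecewise-defined function `v` solves the adjoint equation
`-(1-φ²)v' + (6-b)φφ'v = λv` on `ℝ ∖ {0}`. -/
theorem general_solution_L0_adjoint (b : ℝ) (lam vp vm : ℂ) (v : ℝ → ℂ)
    (hv : ∀ ξ : ℝ, v ξ =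
      if 0 < ξ then
        vp * Complex.exp (-(lam * ξ))
          * ((1 - Real.exp (-(2 * ξ)) : ℝ) : ℂ) ^ (((b : ℂ) - lam) / 2 - 3)
      else
        vm * Complex.exp (-(lam * ξ))
          * ((1 - Real.exp (2 * ξ) : ℝ) : ℂ) ^ (((b : ℂ) + lam) / 2 - 3)) :
    ∀ ξ : ℝ, ξ ≠ 0 →
      DifferentiableAt ℝ v ξ ∧
      -((1 - ((phi ξ : ℝ) : ℂ) ^ 2) * deriv v ξ)
          + (((6 - b) * phi ξ * phi' ξ : ℝ) : ℂ) * v ξ = lam * v ξ := by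
  intro ξ hξ
  rcases lt_or_gt_of_ne hξ with hneg | hpos
  · -- ξ < 0 : the `else` branch
    set s : ℂ := ((b : ℂ) + lam) / 2 - 3 with hs
    have hlt : Real.exp (2 * ξ) < 1 := by
      have h0 : 2 * ξ < 0 := by linarith
      simpa using Real.exp_lt_one_iff.2 h0
    have hD := side_hasDerivAt vm lam s 2 ξ hlt
    have hEq : v =ᶠ[nhds ξ] (fun x : ℝ => vm * Complex.exp (-(lam * x))
        * ((1 - Real.exp (2 * x) : ℝ) : ℂ) ^ s) := by
      filter_upwards [Iio_mem_nhds hneg] with x hx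
      rw [hv x, if_neg (not_lt.2 hx.le)]
    have hDv : HasDerivAt v _ ξ := hD.congr_of_eventuallyEq hEq
    refine ⟨hDv.differentiableAt, ?_⟩
    rw [hDv.deriv, hv ξ, if_neg (not_lt.2 hneg.le)]
    have habs : |ξ| = -ξ := abs_of_neg hneg
    have hsign : Real.sign ξ = -1 := Real.sign_of_neg hneg
    have hexp2 : Real.exp (2 * ξ) = Real.exp ξ * Real.exp ξ := by
      rw [← Real.exp_add]; ring_nf
    have hrne : ((1 - Real.exp (2 * ξ) : ℝ) : ℂ) ≠ 0 := by
      intro hcon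
      have : (1 - Real.exp (2 * ξ) : ℝ) = 0 := by exact_mod_cast hcon
      linarith
    have hpow : ((1 - Real.exp (2 * ξ) : ℝ) : ℂ) ^ s
        = ((1 - Real.exp (2 * ξ) : ℝ) : ℂ) ^ (s - 1)
          * ((1 - Real.exp (2 * ξ) : ℝ) : ℂ) := by
      have h1 : ((1 - Real.exp (2 * ξ) : ℝ) : ℂ) ^ (s - 1 + 1)
          = ((1 - Real.exp (2 * ξ) : ℝ) : ℂ) ^ (s - 1)
            * ((1 - Real.exp (2 * ξ) : ℝ) : ℂ) ^ (1 : ℂ) :=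
        Complex.cpow_add _ _ hrne
      rw [Complex.cpow_one] at h1
      rw [← h1]; congr 1; ring
    simp only [phi, phi', habs, hsign]
    rw [hpow]
    push_cast [hexp2]
    simp only [neg_neg]
    rw [hs]
    ring
  · -- 0 < ξ : the `if` branch
    set s : ℂ := ((b : ℂ) - lam) / 2 - 3 with hs
    have hlt : Real.exp ((-2) * ξ) < 1 := by
      have h0 : (-2 : ℝ) * ξ < 0 := by linarith
      simpa using Real.exp_lt_one_iff.2 h0
    have hD := side_hasDerivAt vp lam s (-2) ξ hlt
    simp only [neg_mul, neg_neg] at hD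
    have hEq : v =ᶠ[nhds ξ] (fun x : ℝ => vp * Complex.exp (-(lam * x))
        * ((1 - Real.exp (-(2 * x)) : ℝ) : ℂ) ^ s) := by
      filter_upwards [Ioi_mem_nhds hpos] with x hx
      rw [hv x, if_pos (Set.mem_Ioi.mp hx)]
    have hDv : HasDerivAt v _ ξ := hD.congr_of_eventuallyEq hEq
    refine ⟨hDv.differentiableAt, ?_⟩
    rw [hDv.deriv, hv ξ, if_pos hpos]
    have habs : |ξ| = ξ := abs_of_pos hpos
    have hsign : Real.sign ξ = 1 := Real.sign_of_pos hpos
    have hexp2 : Real.exp (-(2 * ξ)) = Real.exp (-ξ) * Real.exp (-ξ) := by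
      rw [← Real.exp_add]; ring_nf
    have hrne : ((1 - Real.exp (-(2 * ξ)) : ℝ) : ℂ) ≠ 0 := by
      intro hcon
      have h2 : (1 - Real.exp (-(2 * ξ)) : ℝ) = 0 := by exact_mod_cast hcon
      have h3 : Real.exp (-(2 * ξ)) < 1 := by simpa [neg_mul] using hlt
      linarith
    have hpow : ((1 - Real.exp (-(2 * ξ)) : ℝ) : ℂ) ^ s
        = ((1 - Real.exp (-(2 * ξ)) : ℝ) : ℂ) ^ (s - 1)
          * ((1 - Real.exp (-(2 * ξ)) : ℝ) : ℂ) := by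
      have h1 : ((1 - Real.exp (-(2 * ξ)) : ℝ) : ℂ) ^ (s - 1 + 1)
          = ((1 - Real.exp (-(2 * ξ)) : ℝ) : ℂ) ^ (s - 1)
            * ((1 - Real.exp (-(2 * ξ)) : ℝ) : ℂ) ^ (1 : ℂ) :=
        Complex.cpow_add _ _ hrne
      rw [Complex.cpow_one] at h1
      rw [← h1]; congr 1; ring
    simp only [phi, phi', habs, hsign]
    rw [hpow]
    push_cast [hexp2]
    rw [hs]
    ring
end

section
/- Let b ∈ ℝ and λ ∈ ℂ. The function v : (0,∞) → ℂ defined by v(ξ) = e^{−λξ}·(1−e^{−2ξ})^{(b−λ)/2−3} (principal branch of complex powers of a base in (0,1)) is square-integrable on (0,∞) if and only if 0 < Re λ and Re λ < b − 5. -/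
set_option maxHeartbeats 1000000

open MeasureTheory Set Real

private lemma base_pos {ξ : ℝ} (hξ : 0 < ξ) : 0 < 1 - Real.exp (-(2 * ξ)) := by
  have : Real.exp (-(2 * ξ)) < 1 := Real.exp_lt_one_iff.2 (by linarith)
  linarith

private lemma base_le {ξ : ℝ} (hξ : 0 < ξ) : 1 - Real.exp (-(2 * ξ)) ≤ 2 * ξ := by
  have := Real.add_one_le_exp (-(2 * ξ))
  linarith

private lemma base_ge {ξ : ℝ} (hξ : 0 < ξ) (hξ1 : ξ ≤ 1) :
    2 * Real.exp (-2) * ξ ≤ 1 - Real.exp (-(2 * ξ)) := by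
  have h1 : 2 * ξ + 1 ≤ Real.exp (2 * ξ) := Real.add_one_le_exp (2 * ξ)
  have h2 : Real.exp (-2) ≤ Real.exp (-(2 * ξ)) := Real.exp_le_exp.2 (by linarith)
  have h3 : Real.exp (-(2 * ξ)) * Real.exp (2 * ξ) = 1 := by
    rw [← Real.exp_add]; simp
  have h0 : 0 < Real.exp (-(2 * ξ)) := Real.exp_pos _
  nlinarith [Real.exp_pos (-2)]

private lemma base_ge_one {ξ : ℝ} (hξ : 1 ≤ ξ) :
    1 - Real.exp (-2) ≤ 1 - Real.exp (-(2 * ξ)) := by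
  have : Real.exp (-(2 * ξ)) ≤ Real.exp (-2) := Real.exp_le_exp.2 (by linarith)
  linarith

private lemma cont_f (a α : ℝ) :
    ContinuousOn (fun ξ : ℝ => Real.exp (-(a * ξ)) * (1 - Real.exp (-(2 * ξ))) ^ α)
      (Set.Ioi (0:ℝ)) := by
  apply ContinuousOn.mul
  · exact (Real.continuous_exp.comp (by continuity)).continuousOn
  · apply ContinuousOn.rpow_const
    · exact ((continuous_const.sub (Real.continuous_exp.comp (by continuity)))).continuousOn
    · intro x hx
      exact Or.inl (ne_of_gt (base_pos hx))

private lemma key (a α : ℝ) :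
    IntegrableOn (fun ξ : ℝ => Real.exp (-(a * ξ)) * (1 - Real.exp (-(2 * ξ))) ^ α)
      (Set.Ioi 0) ↔ 0 < a ∧ -1 < α := by
  set f : ℝ → ℝ := fun ξ => Real.exp (-(a * ξ)) * (1 - Real.exp (-(2 * ξ))) ^ α with hf_def
  constructor
  · intro hf
    constructor
    · -- 0 < a
      by_contra ha
      push_neg at ha
      set c : ℝ := min ((1 - Real.exp (-2)) ^ α) 1 with hc_def
      have hr0 : (0:ℝ) < 1 - Real.exp (-2) := by
        have : Real.exp (-2:ℝ) < 1 := Real.exp_lt_one_iff.2 (by norm_num)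
        linarith
      have hc_pos : 0 < c := lt_min (Real.rpow_pos_of_pos hr0 α) one_pos
      have hle : ∀ ξ ∈ Set.Ioi (1:ℝ), c ≤ f ξ := by
        intro ξ hξ
        have hξ1 : (1:ℝ) ≤ ξ := le_of_lt hξ
        have hξ0 : (0:ℝ) < ξ := lt_of_lt_of_le one_pos hξ1
        have he : (1:ℝ) ≤ Real.exp (-(a * ξ)) := Real.one_le_exp (by nlinarith)
        have hb : 0 < 1 - Real.exp (-(2 * ξ)) := base_pos hξ0
        have hb1 : 1 - Real.exp (-(2 * ξ)) ≤ 1 := by have := Real.exp_pos (-(2*ξ)); linarith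
        have hr : c ≤ (1 - Real.exp (-(2 * ξ))) ^ α := by
          rcases le_or_gt 0 α with h | h
          · calc c ≤ (1 - Real.exp (-2)) ^ α := min_le_left _ _
              _ ≤ _ := Real.rpow_le_rpow hr0.le (base_ge_one hξ1) h
          · calc c ≤ 1 := min_le_right _ _
              _ = (1:ℝ) ^ α := (Real.one_rpow α).symm
              _ ≤ _ := Real.rpow_le_rpow_of_nonpos hb hb1 h.le
        calc c = 1 * c := (one_mul c).symm
          _ ≤ Real.exp (-(a * ξ)) * (1 - Real.exp (-(2 * ξ))) ^ α :=
            mul_le_mul he hr hc_pos.le (le_trans (by linarith) he)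
      have hint : IntegrableOn (fun _ : ℝ => c) (Set.Ioi (1:ℝ)) := by
        apply Integrable.mono' (hf.mono_set (Set.Ioi_subset_Ioi zero_le_one))
          aestronglyMeasurable_const
        rw [ae_restrict_iff' measurableSet_Ioi]
        filter_upwards with ξ hξ
        rw [Real.norm_eq_abs, abs_of_pos hc_pos]
        exact hle ξ hξ
      rw [integrableOn_const_iff] at hint
      rcases hint with h | h
      · simp [hc_pos.ne'] at h
      · simp [Real.volume_Ioi] at h
    · -- -1 < α
      by_contra hα
      push_neg at hα
      have hαneg : α < 0 := lt_of_le_of_lt hα (by norm_num)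
      set c1 : ℝ := Real.exp (min 0 (-a)) with hc1_def
      have hc1 : 0 < c1 := Real.exp_pos _
      set K : ℝ := c1 * 2 ^ α with hK_def
      have h2α : (0:ℝ) < 2 ^ α := Real.rpow_pos_of_pos two_pos α
      have hK : 0 < K := mul_pos hc1 h2α
      have hle : ∀ ξ ∈ Set.Ioo (0:ℝ) 1, K * ξ ^ α ≤ f ξ := by
        intro ξ ⟨hξ0, hξ1⟩
        have he : c1 ≤ Real.exp (-(a * ξ)) := by
          apply Real.exp_le_exp.2
          rcases le_or_gt 0 a with h | h
          · exact le_trans (min_le_right _ _) (by nlinarith)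
          · exact le_trans (min_le_left _ _) (by nlinarith)
        have hb : 0 < 1 - Real.exp (-(2 * ξ)) := base_pos hξ0
        have hr : 2 ^ α * ξ ^ α ≤ (1 - Real.exp (-(2 * ξ))) ^ α := by
          rw [← Real.mul_rpow two_pos.le hξ0.le]
          exact Real.rpow_le_rpow_of_nonpos hb (base_le hξ0) hαneg.le
        have hξα : 0 < ξ ^ α := Real.rpow_pos_of_pos hξ0 α
        calc K * ξ ^ α = c1 * (2 ^ α * ξ ^ α) := by ring
          _ ≤ Real.exp (-(a * ξ)) * (1 - Real.exp (-(2 * ξ))) ^ α :=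
            mul_le_mul he hr (by positivity) (Real.exp_pos _).le
      have hint : IntegrableOn (fun ξ : ℝ => ξ ^ α) (Set.Ioo (0:ℝ) 1) := by
        apply Integrable.mono'
          (((hf.mono_set Set.Ioo_subset_Ioi_self).const_mul K⁻¹))
        · apply ContinuousOn.aestronglyMeasurable _ measurableSet_Ioo
          apply ContinuousOn.rpow_const continuousOn_id
          intro x hx; exact Or.inl (ne_of_gt hx.1)
        · rw [ae_restrict_iff' measurableSet_Ioo]
          filter_upwards with ξ hξ
          have hξα : 0 < ξ ^ α := Real.rpow_pos_of_pos hξ.1 α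
          rw [Real.norm_eq_abs, abs_of_pos hξα]
          have h := hle ξ hξ
          calc ξ ^ α = K⁻¹ * (K * ξ ^ α) := by field_simp
            _ ≤ K⁻¹ * f ξ := mul_le_mul_of_nonneg_left h (inv_nonneg.2 hK.le)
      rw [intervalIntegral.integrableOn_Ioo_rpow_iff one_pos] at hint
      linarith
  · rintro ⟨ha, hα⟩
    have hunion : Set.Ioc (0:ℝ) 1 ∪ Set.Ioi 1 = Set.Ioi 0 :=
      Set.Ioc_union_Ioi_eq_Ioi zero_le_one
    rw [← hunion]
    apply IntegrableOn.union
    · -- near 0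
      set K : ℝ := max (2 ^ α) ((2 * Real.exp (-2)) ^ α) with hK_def
      have hrpow : IntegrableOn (fun ξ : ℝ => ξ ^ α) (Set.Ioc (0:ℝ) 1) := by
        rw [integrableOn_Ioc_iff_integrableOn_Ioo]
        exact (intervalIntegral.integrableOn_Ioo_rpow_iff one_pos).2 hα
      apply Integrable.mono' (hrpow.const_mul K)
      · exact ((cont_f a α).mono Set.Ioc_subset_Ioi_self).aestronglyMeasurable
          measurableSet_Ioc
      · rw [ae_restrict_iff' measurableSet_Ioc]
        filter_upwards with ξ hξ
        obtain ⟨hξ0, hξ1⟩ := hξ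
        have hb : 0 < 1 - Real.exp (-(2 * ξ)) := base_pos hξ0
        have hfnn : 0 ≤ f ξ := by positivity
        rw [Real.norm_eq_abs, abs_of_nonneg hfnn]
        have he : Real.exp (-(a * ξ)) ≤ 1 := Real.exp_le_one_iff.2 (by nlinarith)
        have hr : (1 - Real.exp (-(2 * ξ))) ^ α ≤ K * ξ ^ α := by
          rcases le_or_gt 0 α with h | h
          · calc (1 - Real.exp (-(2 * ξ))) ^ α ≤ (2 * ξ) ^ α :=
                Real.rpow_le_rpow hb.le (base_le hξ0) h
              _ = 2 ^ α * ξ ^ α := Real.mul_rpow two_pos.le hξ0.le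
              _ ≤ K * ξ ^ α := by
                have := Real.rpow_pos_of_pos hξ0 α
                nlinarith [le_max_left (2 ^ α) ((2 * Real.exp (-2)) ^ α)]
          · have h2e : (0:ℝ) < 2 * Real.exp (-2) := by positivity
            calc (1 - Real.exp (-(2 * ξ))) ^ α ≤ (2 * Real.exp (-2) * ξ) ^ α :=
                Real.rpow_le_rpow_of_nonpos (by positivity) (base_ge hξ0 hξ1) h.le
              _ = (2 * Real.exp (-2)) ^ α * ξ ^ α := Real.mul_rpow h2e.le hξ0.le
              _ ≤ K * ξ ^ α := by
                have := Real.rpow_pos_of_pos hξ0 α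
                nlinarith [le_max_right (2 ^ α) ((2 * Real.exp (-2)) ^ α)]
        have hrnn : 0 ≤ (1 - Real.exp (-(2 * ξ))) ^ α := by positivity
        calc f ξ ≤ 1 * ((1 - Real.exp (-(2 * ξ))) ^ α) :=
            mul_le_mul he le_rfl hrnn zero_le_one
          _ = (1 - Real.exp (-(2 * ξ))) ^ α := one_mul _
          _ ≤ K * ξ ^ α := hr
    · -- near ∞
      set C : ℝ := max 1 ((1 - Real.exp (-2)) ^ α) with hC_def
      have hr0 : (0:ℝ) < 1 - Real.exp (-2) := by
        have : Real.exp (-2:ℝ) < 1 := Real.exp_lt_one_iff.2 (by norm_num)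
        linarith
      have hexp : IntegrableOn (fun ξ : ℝ => Real.exp (-a * ξ)) (Set.Ioi 1) :=
        exp_neg_integrableOn_Ioi 1 ha
      apply Integrable.mono' (hexp.const_mul C)
      · exact ((cont_f a α).mono fun x (hx : x ∈ Set.Ioi (1:ℝ)) => (lt_trans one_pos hx : (0:ℝ) < x)).aestronglyMeasurable
          measurableSet_Ioi
      · rw [ae_restrict_iff' measurableSet_Ioi]
        filter_upwards with ξ hξ
        have hξ0 : (0:ℝ) < ξ := lt_trans one_pos hξ
        have hb : 0 < 1 - Real.exp (-(2 * ξ)) := base_pos hξ0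
        have hb1 : 1 - Real.exp (-(2 * ξ)) ≤ 1 := by have := Real.exp_pos (-(2*ξ)); linarith
        have hfnn : 0 ≤ f ξ := by positivity
        rw [Real.norm_eq_abs, abs_of_nonneg hfnn]
        have hr : (1 - Real.exp (-(2 * ξ))) ^ α ≤ C := by
          rcases le_or_gt 0 α with h | h
          · calc (1 - Real.exp (-(2 * ξ))) ^ α ≤ 1 ^ α := Real.rpow_le_rpow hb.le hb1 h
              _ = 1 := Real.one_rpow α
              _ ≤ C := le_max_left _ _
          · calc (1 - Real.exp (-(2 * ξ))) ^ α ≤ (1 - Real.exp (-2)) ^ α :=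
                Real.rpow_le_rpow_of_nonpos hr0 (base_ge_one hξ.le) h.le
              _ ≤ C := le_max_right _ _
        have he : 0 < Real.exp (-(a * ξ)) := Real.exp_pos _
        calc f ξ = (1 - Real.exp (-(2 * ξ))) ^ α * Real.exp (-(a * ξ)) := mul_comm _ _
          _ ≤ C * Real.exp (-(a * ξ)) := mul_le_mul_of_nonneg_right hr he.le
          _ = C * Real.exp (-a * ξ) := by rw [neg_mul]

open MeasureTheory

/-- `v(ξ) = e^{-λξ}·(1-e^{-2ξ})^{(b-λ)/2-3}` is square-integrable on `(0,∞)`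
if and only if `0 < Re λ < b - 5`. -/
theorem L2_criterion_Ioi (b : ℝ) (lam : ℂ) (v : ℝ → ℂ)
    (hv : ∀ ξ : ℝ, v ξ = Complex.exp (-(lam * ξ))
        * ((1 - Real.exp (-(2 * ξ)) : ℝ) : ℂ) ^ (((b : ℂ) - lam) / 2 - 3)) :
    MemLp v 2 ((volume : Measure ℝ).restrict (Set.Ioi 0)) ↔
      0 < lam.re ∧ lam.re < b - 5 := by
  have hmeas : AEStronglyMeasurable v ((volume : Measure ℝ).restrict (Set.Ioi 0)) := by
    have hcont : ContinuousOn v (Set.Ioi 0) := by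
      have : ContinuousOn (fun ξ : ℝ => Complex.exp (-(lam * ξ))
          * ((1 - Real.exp (-(2 * ξ)) : ℝ) : ℂ) ^ (((b : ℂ) - lam) / 2 - 3)) (Set.Ioi 0) := by
        apply ContinuousOn.mul
        · exact (Complex.continuous_exp.comp (by continuity)).continuousOn
        · apply ContinuousOn.cpow_const
          · exact (Complex.continuous_ofReal.comp
              (continuous_const.sub (Real.continuous_exp.comp (by continuity)))).continuousOn
          · intro x hx
            exact Complex.ofReal_mem_slitPlane.2 (base_pos hx)
      exact this.congr fun x _ => hv x
    exact hcont.aestronglyMeasurable measurableSet_Ioi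
  rw [memLp_two_iff_integrable_sq_norm hmeas]
  have hβ : ((((b : ℂ) - lam) / 2 - 3)).re = (b - lam.re) / 2 - 3 := by
    simp [Complex.div_re, Complex.normSq]
  have hnorm : ∀ ξ ∈ Set.Ioi (0:ℝ), ‖v ξ‖ ^ 2
      = Real.exp (-(2 * lam.re * ξ)) * (1 - Real.exp (-(2 * ξ))) ^ (b - lam.re - 6) := by
    intro ξ hξ
    have hb : 0 < 1 - Real.exp (-(2 * ξ)) := base_pos hξ
    rw [hv ξ, norm_mul, Complex.norm_exp,
      Complex.norm_cpow_eq_rpow_re_of_pos hb, hβ]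
    have hre : (-(lam * ξ)).re = -(lam.re * ξ) := by simp
    rw [hre, mul_pow, sq (Real.exp (-(lam.re * ξ))), ← Real.exp_add]
    have h1 : -(lam.re * ξ) + -(lam.re * ξ) = -(2 * lam.re * ξ) := by ring
    have h2 : ((1 - Real.exp (-(2 * ξ))) ^ ((b - lam.re) / 2 - 3)) ^ 2
        = (1 - Real.exp (-(2 * ξ))) ^ (b - lam.re - 6) := by
      rw [← Real.rpow_natCast ((1 - Real.exp (-(2 * ξ))) ^ ((b - lam.re) / 2 - 3)) 2,
        ← Real.rpow_mul hb.le]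
      congr 1
      push_cast
      ring
    rw [h1, h2]
  have hcongr : Integrable (fun ξ => ‖v ξ‖ ^ 2) ((volume : Measure ℝ).restrict (Set.Ioi 0))
      ↔ IntegrableOn
        (fun ξ : ℝ => Real.exp (-(2 * lam.re * ξ)) * (1 - Real.exp (-(2 * ξ))) ^ (b - lam.re - 6))
        (Set.Ioi 0) := by
    apply integrable_congr
    filter_upwards [ae_restrict_mem measurableSet_Ioi] with ξ hξ
    exact hnorm ξ hξ
  rw [hcongr, key (2 * lam.re) (b - lam.re - 6)]
  constructor
  · rintro ⟨h1, h2⟩; exact ⟨by linarith, by linarith⟩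
  · rintro ⟨h1, h2⟩; exact ⟨by linarith, by linarith⟩
end

section
/- Let b ∈ ℝ, λ ∈ ℂ, and m₊, m₋ ∈ ℂ. Define m : ℝ∖{0} → ℂ by m(ξ) = m₊·e^{λξ}·(1−e^{−2ξ})^{(λ−b)/2} for ξ > 0 and m(ξ) = m₋·e^{λξ}·(1−e^{2ξ})^{−(λ+b)/2} for ξ < 0, with complex powers of positive real bases via the principal branch. Then m is differentiable on ℝ∖{0} and satisfies (1 − φ(ξ)²)·m'(ξ) − b·φ(ξ)·φ'(ξ)·m(ξ) = λ·m(ξ) for every ξ ≠ 0. -/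
open MeasureTheory Complex

/-- the piecewise-defined function `m` solves the first-order equation
`(1-φ²)m' - bφφ'm = λm` on `ℝ ∖ {0}`. -/
theorem general_solution_momentum (b : ℝ) (lam mp mm : ℂ) (m : ℝ → ℂ)
    (hm : ∀ ξ : ℝ, m ξ =
      if 0 < ξ then
        mp * Complex.exp (lam * ξ)
          * ((1 - Real.exp (-(2 * ξ)) : ℝ) : ℂ) ^ ((lam - (b : ℂ)) / 2)
      else
        mm * Complex.exp (lam * ξ)
          * ((1 - Real.exp (2 * ξ) : ℝ) : ℂ) ^ (-((lam + (b : ℂ)) / 2))) :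
    ∀ ξ : ℝ, ξ ≠ 0 →
      DifferentiableAt ℝ m ξ ∧
      (1 - ((phi ξ : ℝ) : ℂ) ^ 2) * deriv m ξ
          - ((b * phi ξ * phi' ξ : ℝ) : ℂ) * m ξ = lam * m ξ := by
  intro ξ hξ
  rcases hξ.lt_or_gt with hneg | hpos
  · -- ξ < 0
    set c : ℂ := -((lam + (b:ℂ)) / 2) with hc
    have hE : Real.exp (2 * ξ) < 1 := by
      rw [Real.exp_lt_one_iff]; linarith
    have hupos : (0:ℝ) < 1 - Real.exp (2 * ξ) := by linarith
    have hune : ((1 - Real.exp (2 * ξ) : ℝ) : ℂ) ≠ 0 := by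
      exact_mod_cast hupos.ne'
    have hr : HasDerivAt (fun x : ℝ => 1 - Real.exp (2 * x)) (-(2 * Real.exp (2 * ξ))) ξ := by
      have h1 : HasDerivAt (fun x : ℝ => 2 * x) 2 ξ := by
        simpa using (hasDerivAt_id ξ).const_mul (2:ℝ)
      have := h1.exp.const_sub 1
      rw [show -(2 * Real.exp (2 * ξ)) = -(Real.exp (2 * ξ) * 2) by ring]; exact this
    have hu : HasDerivAt (fun x : ℝ => ((1 - Real.exp (2 * x) : ℝ) : ℂ))
        ((-(2 * Real.exp (2 * ξ)) : ℝ) : ℂ) ξ := hr.ofReal_comp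
    have hslit : ((1 - Real.exp (2 * ξ) : ℝ) : ℂ) ∈ Complex.slitPlane :=
      Complex.ofReal_mem_slitPlane.mpr hupos
    have hcpZ : HasDerivAt (fun z : ℂ => z ^ c)
        (c * ((1 - Real.exp (2 * ξ) : ℝ) : ℂ) ^ (c - 1) * 1)
        ((1 - Real.exp (2 * ξ) : ℝ) : ℂ) :=
      (hasDerivAt_id _).cpow_const hslit
    have hcp : HasDerivAt (fun x : ℝ => ((1 - Real.exp (2 * x) : ℝ) : ℂ) ^ c)
        (c * ((1 - Real.exp (2 * ξ) : ℝ) : ℂ) ^ (c - 1) * 1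
          * ((-(2 * Real.exp (2 * ξ)) : ℝ) : ℂ)) ξ := HasDerivAt.comp (h₂ := fun z : ℂ => z ^ c) ξ hcpZ hu
    have hexp : HasDerivAt (fun x : ℝ => Complex.exp (lam * x))
        (Complex.exp (lam * ξ) * lam) ξ := by
      have h0 : HasDerivAt (fun x : ℝ => ((x:ℂ))) 1 ξ := by
        simpa using (hasDerivAt_id ξ).ofReal_comp
      simpa using (h0.const_mul lam).cexp
    have hf := ((hexp.const_mul mm).mul hcp)
    have heq : m =ᶠ[nhds ξ] (fun x : ℝ =>
        mm * Complex.exp (lam * x) * ((1 - Real.exp (2 * x) : ℝ) : ℂ) ^ c) := by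
      filter_upwards [eventually_lt_nhds hneg] with x hx
      rw [hm x, if_neg (by linarith)]
    have hder := hf.congr_of_eventuallyEq heq
    refine ⟨hder.differentiableAt, ?_⟩
    rw [hder.deriv, hm ξ, if_neg (by linarith)]
    have habs : |ξ| = -ξ := abs_of_neg hneg
    have hsign : Real.sign ξ = -1 := Real.sign_of_neg hneg
    have hphi2 : ((phi ξ : ℝ) : ℂ) ^ 2 = ((Real.exp (2 * ξ) : ℝ) : ℂ) := by
      unfold phi; rw [habs]
      norm_cast
      rw [sq, ← Real.exp_add]; ring_nf
    have hphiphi' : ((b * phi ξ * phi' ξ : ℝ) : ℂ) = ((b * Real.exp (2 * ξ) : ℝ) : ℂ) := by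
      congr 1
      unfold phi phi'; rw [habs, hsign, neg_neg]
      rw [show (2:ℝ) * ξ = ξ + ξ by ring, Real.exp_add]; ring
    rw [hphi2, hphiphi']
    have hkey : ((1 - Real.exp (2 * ξ) : ℝ) : ℂ) ^ (c - 1)
        * ((1 - Real.exp (2 * ξ) : ℝ) : ℂ)
        = ((1 - Real.exp (2 * ξ) : ℝ) : ℂ) ^ c := by
      rw [Complex.cpow_sub _ _ hune, Complex.cpow_one]
      exact div_mul_cancel₀ _ hune
    push_cast at hkey ⊢
    linear_combination (-2 * Complex.exp (2 * (ξ:ℂ)) * c * (mm * Complex.exp (lam * ξ))) * hkey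
  · -- ξ > 0
    set c : ℂ := (lam - (b:ℂ)) / 2 with hc
    have hE : Real.exp (-(2 * ξ)) < 1 := by
      rw [Real.exp_lt_one_iff]; linarith
    have hupos : (0:ℝ) < 1 - Real.exp (-(2 * ξ)) := by linarith
    have hune : ((1 - Real.exp (-(2 * ξ)) : ℝ) : ℂ) ≠ 0 := by
      exact_mod_cast hupos.ne'
    have hr : HasDerivAt (fun x : ℝ => 1 - Real.exp (-(2 * x))) (2 * Real.exp (-(2 * ξ))) ξ := by
      have h1 : HasDerivAt (fun x : ℝ => -(2 * x)) (-2) ξ := by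
        have := ((hasDerivAt_id' ξ).const_mul (2:ℝ)).neg; simp only [mul_one] at this; exact this
      have := h1.exp.const_sub 1
      rw [show 2 * Real.exp (-(2 * ξ)) = -(Real.exp (-(2 * ξ)) * -2) by ring]; exact this
    have hu : HasDerivAt (fun x : ℝ => ((1 - Real.exp (-(2 * x)) : ℝ) : ℂ))
        ((2 * Real.exp (-(2 * ξ)) : ℝ) : ℂ) ξ := hr.ofReal_comp
    have hslit : ((1 - Real.exp (-(2 * ξ)) : ℝ) : ℂ) ∈ Complex.slitPlane :=
      Complex.ofReal_mem_slitPlane.mpr hupos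
    have hcpZ : HasDerivAt (fun z : ℂ => z ^ c)
        (c * ((1 - Real.exp (-(2 * ξ)) : ℝ) : ℂ) ^ (c - 1) * 1)
        ((1 - Real.exp (-(2 * ξ)) : ℝ) : ℂ) :=
      (hasDerivAt_id _).cpow_const hslit
    have hcp : HasDerivAt (fun x : ℝ => ((1 - Real.exp (-(2 * x)) : ℝ) : ℂ) ^ c)
        (c * ((1 - Real.exp (-(2 * ξ)) : ℝ) : ℂ) ^ (c - 1) * 1
          * ((2 * Real.exp (-(2 * ξ)) : ℝ) : ℂ)) ξ := HasDerivAt.comp (h₂ := fun z : ℂ => z ^ c) ξ hcpZ hu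
    have hexp : HasDerivAt (fun x : ℝ => Complex.exp (lam * x))
        (Complex.exp (lam * ξ) * lam) ξ := by
      have h0 : HasDerivAt (fun x : ℝ => ((x:ℂ))) 1 ξ := by
        simpa using (hasDerivAt_id ξ).ofReal_comp
      simpa using (h0.const_mul lam).cexp
    have hf := ((hexp.const_mul mp).mul hcp)
    have heq : m =ᶠ[nhds ξ] (fun x : ℝ =>
        mp * Complex.exp (lam * x) * ((1 - Real.exp (-(2 * x)) : ℝ) : ℂ) ^ c) := by
      filter_upwards [eventually_gt_nhds hpos] with x hx
      rw [hm x, if_pos hx]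
    have hder := hf.congr_of_eventuallyEq heq
    refine ⟨hder.differentiableAt, ?_⟩
    rw [hder.deriv, hm ξ, if_pos hpos]
    have habs : |ξ| = ξ := abs_of_pos hpos
    have hsign : Real.sign ξ = 1 := Real.sign_of_pos hpos
    have hphi2 : ((phi ξ : ℝ) : ℂ) ^ 2 = ((Real.exp (-(2 * ξ)) : ℝ) : ℂ) := by
      unfold phi; rw [habs]
      norm_cast
      rw [sq, ← Real.exp_add]; ring_nf
    have hphiphi' : ((b * phi ξ * phi' ξ : ℝ) : ℂ)
        = ((-(b * Real.exp (-(2 * ξ))) : ℝ) : ℂ) := by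
      congr 1
      unfold phi phi'; rw [habs, hsign]
      rw [show -((2:ℝ) * ξ) = -ξ + -ξ by ring, Real.exp_add]; ring
    rw [hphi2, hphiphi']
    have hkey : ((1 - Real.exp (-(2 * ξ)) : ℝ) : ℂ) ^ (c - 1)
        * ((1 - Real.exp (-(2 * ξ)) : ℝ) : ℂ)
        = ((1 - Real.exp (-(2 * ξ)) : ℝ) : ℂ) ^ c := by
      rw [Complex.cpow_sub _ _ hune, Complex.cpow_one]
      exact div_mul_cancel₀ _ hune
    push_cast at hkey ⊢
    linear_combination (2 * Complex.exp (-(2 * (ξ:ℂ))) * c * (mp * Complex.exp (lam * ξ))) * hkey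
end

section
/- Let b ∈ ℝ with b < 5 and let λ ∈ ℂ satisfy 0 < |Re λ| < 5 − b. Then there exists a function v ∈ L²(ℝ,ℂ), not identically zero, which is locally absolutely continuous on ℝ∖{0}, such that the function ξ ↦ (1 − φ(ξ)²)·v'(ξ) belongs to L²(ℝ,ℂ), and (1 − φ(ξ)²)·v'(ξ) + (4−b)·φ(ξ)·φ'(ξ)·v(ξ) = λ·v(ξ) for every ξ ≠ 0. That is, every λ with 0 < |Re λ| < 5−b is an eigenvalue of the operator L₀ = (1−φ²)∂_ξ + (4−b)φφ' on L²(ℝ) with domain {v ∈ L² : (1−φ²)v' ∈ L²}. -/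
open MeasureTheory Complex

lemma rpow_sandwich {lo y hi : ℝ} (hlo : 0 < lo) (h1 : lo ≤ y) (h2 : y ≤ hi) (z : ℝ) :
    y ^ z ≤ lo ^ z + hi ^ z := by
  rcases le_or_gt 0 z with hz | hz
  · have := Real.rpow_le_rpow (by linarith) h2 hz
    have h0 : 0 ≤ lo ^ z := Real.rpow_nonneg hlo.le z
    linarith
  · have := Real.rpow_le_rpow_of_nonpos hlo h1 hz.le
    have h0 : 0 ≤ hi ^ z := Real.rpow_nonneg (by linarith) z
    linarith

set_option maxHeartbeats 1000000 in
lemma core (b : ℝ) (lam : ℂ) (hneg : lam.re < 0) (hlow : b - 5 < lam.re) :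
    ∃ v v' : ℝ → ℂ,
      MemLp v 2 (volume : Measure ℝ) ∧
      ¬ (v =ᵐ[(volume : Measure ℝ)] 0) ∧
      (∀ ξ : ℝ, ξ ≠ 0 → HasDerivAt v (v' ξ) ξ) ∧
      MemLp (fun ξ : ℝ => (1 - ((phi ξ : ℝ) : ℂ) ^ 2) * v' ξ) 2 (volume : Measure ℝ) ∧
      ∀ ξ : ℝ, ξ ≠ 0 →
        (1 - ((phi ξ : ℝ) : ℂ) ^ 2) * v' ξ
            + (((4 - b) * phi ξ * phi' ξ : ℝ) : ℂ) * v ξ = lam * v ξ := by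
  set c : ℝ := 4 - b with hc
  set μ : ℂ := (lam + (c : ℂ)) / 2 with hμ
  -- the base function
  set B : ℝ → ℝ := fun x => 1 - Real.exp (-(2 * x)) with hB
  have hBpos : ∀ x : ℝ, 0 < x → 0 < B x := by
    intro x hx
    have : Real.exp (-(2 * x)) < 1 := Real.exp_lt_one_iff.mpr (by linarith)
    simpa [hB] using this
  set F : ℝ → ℂ := fun x => Complex.exp (lam * x) * ((B x : ℝ) : ℂ) ^ μ with hF
  set v : ℝ → ℂ := fun x => if 0 < x then F x else 0 with hv
  set G : ℝ → ℂ := fun x =>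
    (lam + (c : ℂ) * Real.exp (-(2 * x))) / ((B x : ℝ) : ℂ) with hG
  set v' : ℝ → ℂ := fun x => if 0 < x then G x * v x else 0 with hv'
  have hBne : ∀ x : ℝ, 0 < x → ((B x : ℝ) : ℂ) ≠ 0 := by
    intro x hx
    exact_mod_cast (hBpos x hx).ne'
  -- derivative
  have hderiv : ∀ x : ℝ, 0 < x → HasDerivAt v (v' x) x := by
    intro x hx
    have hBder : HasDerivAt (fun y : ℝ => ((B y : ℝ) : ℂ))
        ((2 * Real.exp (-(2 * x)) : ℝ) : ℂ) x := by
      have h1 : HasDerivAt (fun y : ℝ => B y) (2 * Real.exp (-(2 * x))) x := by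
        have h2 : HasDerivAt (fun y : ℝ => -(2 * y)) (-2) x := by
          simpa [Pi.neg_def] using ((hasDerivAt_id x).const_mul (2:ℝ)).neg
        have := h2.exp
        have h3 : HasDerivAt (fun y : ℝ => Real.exp (-(2 * y)))
            (Real.exp (-(2 * x)) * (-2)) x := this
        simpa [hB, mul_comm] using h3.const_sub 1
      exact h1.ofReal_comp
    have hEder : HasDerivAt (fun y : ℝ => Complex.exp (lam * y))
        (lam * Complex.exp (lam * x)) x := by
      have h0 : HasDerivAt (fun y : ℝ => ((y : ℝ) : ℂ)) 1 x := (hasDerivAt_id x).ofReal_comp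
      have h1 : HasDerivAt (fun y : ℝ => lam * ((y : ℝ) : ℂ)) (lam * 1) x := h0.const_mul lam
      simpa [mul_comm] using h1.cexp
    have hPder : HasDerivAt (fun y : ℝ => ((B y : ℝ) : ℂ) ^ μ)
        (μ * ((B x : ℝ) : ℂ) ^ (μ - 1) * ((2 * Real.exp (-(2 * x)) : ℝ) : ℂ)) x := by
      have h0 : ((B x : ℝ) : ℂ) ∈ Complex.slitPlane :=
        Complex.mem_slitPlane_iff.mpr (Or.inl (by simpa using hBpos x hx))
      have := (Complex.hasStrictDerivAt_cpow_const (c := μ) h0).hasDerivAt.comp x hBder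
      simpa [mul_assoc, Function.comp_def] using this
    have hFder := hEder.mul hPder
    have hxmem : Set.Ioi (0:ℝ) ∈ nhds x := isOpen_Ioi.mem_nhds hx
    have heq : v =ᶠ[nhds x] F := by
      filter_upwards [hxmem] with y hy
      simp [hv, Set.mem_Ioi.mp hy]
    have hval : lam * Complex.exp (lam * ↑x) * (((B x : ℝ):ℂ)) ^ μ +
        Complex.exp (lam * ↑x) * (μ * ((B x:ℝ):ℂ) ^ (μ - 1) * ((2 * Real.exp (-(2*x)) : ℝ):ℂ))
        = v' x := by
      have hBne' := hBne x hx
      have hsub : ((B x:ℝ):ℂ) ^ (μ - 1) = ((B x:ℝ):ℂ) ^ μ / ((B x:ℝ):ℂ) := by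
        rw [Complex.cpow_sub _ _ hBne', Complex.cpow_one]
      rw [hsub]
      simp only [hv', hv, hx, if_pos, hG, hF]
      have h2μ : (2 : ℂ) * μ = lam + (c:ℂ) := by
        rw [hμ]; ring
      have hBexp : ((B x : ℝ) : ℂ) = 1 - ((Real.exp (-(2*x)) : ℝ) : ℂ) := by
        simp [hB]
      set E := Complex.exp (lam * x)
      set P := ((B x : ℝ) : ℂ) ^ μ
      set Bc := ((B x : ℝ) : ℂ)
      push_cast
      push_cast at hBexp
      field_simp
      linear_combination (E * P * Complex.exp (-(2 * (x:ℂ)))) * h2μ + (lam * E * P) * hBexp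
    exact (hFder.congr_of_eventuallyEq heq).congr_deriv hval
  -- measurability facts
  have hBcont : Continuous B := by
    rw [hB]; continuity
  have hFmeas : Measurable F := by
    have h1 : Measurable fun x : ℝ => Complex.exp (lam * x) :=
      (Complex.measurable_ofReal.const_mul lam).cexp
    have h2 : Measurable fun x : ℝ => ((B x : ℝ) : ℂ) ^ μ :=
      (Complex.measurable_ofReal.comp hBcont.measurable).pow measurable_const
    exact h1.mul h2
  have hIoi : MeasurableSet {x : ℝ | 0 < x} := by
    simpa [Set.Ioi] using measurableSet_Ioi (a := (0:ℝ))
  have hvmeas : Measurable v := by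
    rw [hv]; exact Measurable.ite hIoi hFmeas measurable_const
  -- norm of v
  set p : ℝ := (lam.re + c) / 2 with hp
  have hμre : μ.re = p := by
    rw [hμ, hp]
    rw [show ((2:ℂ)) = ((2:ℝ):ℂ) by norm_num, Complex.div_ofReal_re]
    simp
  have hnorm : ∀ x : ℝ, 0 < x → ‖v x‖ = Real.exp (lam.re * x) * (B x) ^ p := by
    intro x hx
    rw [hv]
    simp only [hx, if_pos, hF]
    rw [norm_mul, Complex.norm_exp,
      Complex.norm_cpow_eq_rpow_re_of_pos (hBpos x hx), hμre]
    congr 1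
    simp [Complex.mul_re]
  have hBup : ∀ x : ℝ, 0 ≤ x → B x ≤ 2 * x := by
    intro x hx
    have := Real.add_one_le_exp (-(2*x))
    have h2 : Real.exp (-(2*x)) ≥ 1 - 2*x := by linarith
    simp only [hB]; linarith
  have hBlow : ∀ x : ℝ, 0 < x → x ≤ 1/2 → (2 / Real.exp 1) * x ≤ B x := by
    intro x hx hx2
    have h1 : 1 + 2*x ≤ Real.exp (2*x) := by
      have := Real.add_one_le_exp (2*x); linarith
    have hex : Real.exp (2*x) ≤ Real.exp 1 := Real.exp_le_exp.mpr (by linarith)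
    have hexpos : 0 < Real.exp (2*x) := Real.exp_pos _
    have he1 : (0:ℝ) < Real.exp 1 := Real.exp_pos 1
    have hBx : B x = (Real.exp (2*x) - 1) / Real.exp (2*x) := by
      simp only [hB]
      rw [Real.exp_neg]
      field_simp
    rw [hBx, le_div_iff₀ hexpos]
    calc 2 / Real.exp 1 * x * Real.exp (2*x) ≤ 2 / Real.exp 1 * x * Real.exp 1 := by
          apply mul_le_mul_of_nonneg_left hex (by positivity)
      _ = 2 * x := by field_simp
      _ ≤ Real.exp (2*x) - 1 := by linarith
  have h2p : -1 < 2 * p := by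
    rw [hp]; rw [hc]; linarith
  set K : ℝ := (2 / Real.exp 1) ^ (2*p) + 2 ^ (2*p) with hK
  set K' : ℝ := (1 - Real.exp (-1)) ^ (2*p) + 1 with hK'
  have he1pos : (0:ℝ) < 1 - Real.exp (-1) := by
    have : Real.exp (-1) < 1 := Real.exp_lt_one_iff.mpr (by norm_num)
    linarith
  have hKpos : 0 ≤ K := by
    rw [hK]
    have := Real.rpow_nonneg (by positivity : (0:ℝ) ≤ 2 / Real.exp 1) (2*p)
    have := Real.rpow_nonneg (by norm_num : (0:ℝ) ≤ 2) (2*p)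
    linarith
  have hK'pos : 0 ≤ K' := by
    rw [hK']
    have := Real.rpow_nonneg he1pos.le (2*p)
    linarith
  have hsqnorm : ∀ x : ℝ, 0 < x → ‖v x‖^2 = Real.exp (2 * lam.re * x) * (B x) ^ (2*p) := by
    intro x hx
    rw [hnorm x hx,
      show (Real.exp (lam.re*x) * B x ^ p)^2
        = (Real.exp (lam.re*x) * Real.exp (lam.re*x)) * (B x ^ p * B x ^ p) by ring,
      ← Real.exp_add, ← Real.rpow_add (hBpos x hx)]
    congr 1
    · congr 1; ring
    · congr 1; ring
  set g : ℝ → ℝ := (Set.indicator (Set.Ioc 0 (1/2)) (fun x => K * x ^ (2*p))) +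
    (Set.indicator (Set.Ioi (1/2)) (fun x => K' * Real.exp (2 * lam.re * x))) with hg
  have hgint : Integrable g := by
    apply Integrable.add
    · apply IntegrableOn.integrable_indicator _ measurableSet_Ioc
      have := (intervalIntegral.intervalIntegrable_rpow' (a := 0) (b := 1/2) h2p)
      have h2 := (intervalIntegrable_iff_integrableOn_Ioc_of_le (by norm_num : (0:ℝ) ≤ 1/2)).mp this
      exact h2.const_mul K
    · apply IntegrableOn.integrable_indicator _ measurableSet_Ioi
      have h0 : (0:ℝ) < -(2 * lam.re) := by linarith
      have := exp_neg_integrableOn_Ioi (1/2) h0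
      have h2 : IntegrableOn (fun x : ℝ => Real.exp (2 * lam.re * x)) (Set.Ioi (1/2)) := by
        simpa using this
      exact h2.const_mul K'
  have hbound : ∀ x : ℝ, ‖‖v x‖^2‖ ≤ g x := by
    intro x
    have hg1 : 0 ≤ Set.indicator (Set.Ioc 0 (1/2:ℝ)) (fun x => K * x ^ (2*p)) x :=
      Set.indicator_nonneg (fun y hy => by
        have : (0:ℝ) < y := hy.1
        positivity) x
    have hg2 : 0 ≤ Set.indicator (Set.Ioi (1/2:ℝ)) (fun x => K' * Real.exp (2 * lam.re * x)) x :=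
      Set.indicator_nonneg (fun y _ => by positivity) x
    rcases le_or_gt x 0 with hx | hx
    · have : v x = 0 := by rw [hv]; simp [not_lt.mpr hx]
      rw [this]
      simp only [hg, Pi.add_apply]
      simpa using add_nonneg hg1 hg2
    · rw [Real.norm_of_nonneg (by positivity), hsqnorm x hx]
      rcases le_or_gt x (1/2) with hx2 | hx2
      · have hmem : x ∈ Set.Ioc (0:ℝ) (1/2) := ⟨hx, hx2⟩
        have hmem' : x ∉ Set.Ioi (1/2:ℝ) := by simp [Set.mem_Ioi]; linarith
        have hBb : (B x) ^ (2*p) ≤ K * x ^ (2*p) := by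
          have hlow := hBlow x hx hx2
          have hup := hBup x hx.le
          have hup2 : B x ≤ 2 * x := hup
          have := rpow_sandwich (lo := (2 / Real.exp 1) * x) (y := B x) (hi := 2 * x)
            (by positivity) hlow hup2 (2*p)
          calc (B x) ^ (2*p) ≤ ((2 / Real.exp 1) * x) ^ (2*p) + (2 * x) ^ (2*p) := this
            _ = K * x ^ (2*p) := by
                rw [Real.mul_rpow (by positivity) hx.le, Real.mul_rpow (by norm_num) hx.le, hK]
                ring
        have hexp1 : Real.exp (2 * lam.re * x) ≤ 1 := by
          apply Real.exp_le_one_iff.mpr; nlinarith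
        simp only [hg, Pi.add_apply, Set.indicator_of_mem hmem, Set.indicator_of_notMem hmem']
        have h1 : 0 ≤ (B x) ^ (2*p) := Real.rpow_nonneg (hBpos x hx).le _
        have h2 : 0 < Real.exp (2 * lam.re * x) := Real.exp_pos _
        calc Real.exp (2 * lam.re * x) * (B x) ^ (2*p) ≤ 1 * (B x) ^ (2*p) :=
              mul_le_mul_of_nonneg_right hexp1 h1
          _ = (B x) ^ (2*p) := one_mul _
          _ ≤ K * x ^ (2*p) + 0 := by rw [add_zero]; exact hBb
      · have hmem : x ∉ Set.Ioc (0:ℝ) (1/2) := by simp [Set.mem_Ioc]; intro; linarith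
        have hmem' : x ∈ Set.Ioi (1/2:ℝ) := hx2
        have hBb : (B x) ^ (2*p) ≤ K' := by
          have hlow : 1 - Real.exp (-1) ≤ B x := by
            simp only [hB]
            have : Real.exp (-(2*x)) ≤ Real.exp (-1) := Real.exp_le_exp.mpr (by linarith)
            linarith
          have hup : B x ≤ 1 := by
            simp only [hB]
            have := Real.exp_pos (-(2*x)); linarith
          have := rpow_sandwich he1pos hlow hup (2*p)
          calc (B x) ^ (2*p) ≤ (1 - Real.exp (-1)) ^ (2*p) + 1 ^ (2*p) := this
            _ = K' := by rw [Real.one_rpow, hK']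
        simp only [hg, Pi.add_apply, Set.indicator_of_notMem hmem, Set.indicator_of_mem hmem']
        have h1 : 0 < Real.exp (2 * lam.re * x) := Real.exp_pos _
        calc Real.exp (2 * lam.re * x) * (B x) ^ (2*p)
            ≤ Real.exp (2 * lam.re * x) * K' := mul_le_mul_of_nonneg_left hBb h1.le
          _ = 0 + K' * Real.exp (2 * lam.re * x) := by ring
  have hsq : Integrable (fun x : ℝ => ‖v x‖^2) :=
    hgint.mono' ((hvmeas.norm.pow_const 2).aestronglyMeasurable)
      (Filter.Eventually.of_forall hbound)
  have hmem : MemLp v 2 (volume : Measure ℝ) :=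
    (memLp_two_iff_integrable_sq_norm hvmeas.aestronglyMeasurable).mpr hsq
  -- v is not a.e. zero
  have hne : ¬ (v =ᵐ[(volume : Measure ℝ)] 0) := by
    intro hae
    have h0 : volume {x : ℝ | v x ≠ 0} = 0 := by
      simpa [Filter.EventuallyEq, ae_iff] using hae
    have hsub : Set.Ioi (0:ℝ) ⊆ {x : ℝ | v x ≠ 0} := by
      intro x hx
      have hx' : 0 < x := hx
      simp only [Set.mem_setOf_eq, hv, hx', if_pos, hF]
      apply mul_ne_zero (Complex.exp_ne_zero _)
      intro h
      rcases (Complex.cpow_eq_zero_iff _ _).mp h with ⟨h1, _⟩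
      exact hBne x hx' h1
    have hmono := measure_mono_null hsub h0
    rw [Real.volume_Ioi] at hmono
    exact (by simp : (⊤ : ENNReal) ≠ 0) hmono
  -- algebraic identities involving phi
  have hphisq : ∀ x : ℝ, 0 < x → phi x ^ 2 = Real.exp (-(2*x)) := by
    intro x hx
    rw [phi, abs_of_pos hx, pow_two, ← Real.exp_add]
    congr 1; ring
  have hphi : ∀ x : ℝ, 0 < x → (1 - ((phi x : ℝ) : ℂ) ^ 2) = ((B x : ℝ) : ℂ) := by
    intro x hx
    calc (1 - ((phi x : ℝ) : ℂ) ^ 2) = (((1 - phi x ^ 2 : ℝ)) : ℂ) := by push_cast; ring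
      _ = ((B x : ℝ) : ℂ) := by rw [hphisq x hx]
  have hid2 : ∀ ξ : ℝ, (1 - ((phi ξ : ℝ) : ℂ) ^ 2) * v' ξ =
      (if 0 < ξ then (lam + (c:ℂ) * ((Real.exp (-(2*ξ)) : ℝ) : ℂ)) else 0) * v ξ := by
    intro ξ
    rcases le_or_gt ξ 0 with hξ | hξ
    · simp [hv', not_lt.mpr hξ]
    · rw [hphi ξ hξ]
      simp only [hv', hξ, if_pos]
      rw [hG, ← mul_assoc, mul_div_cancel₀ _ (hBne ξ hξ)]
  -- measurability of v'
  have hv'meas : Measurable v' := by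
    rw [hv']
    apply Measurable.ite hIoi _ measurable_const
    apply Measurable.mul _ hvmeas
    rw [hG]
    have hexpc : Continuous fun x : ℝ => Real.exp (-(2*x)) := by continuity
    apply Measurable.div
    · apply Measurable.add measurable_const
      exact (Complex.measurable_ofReal.comp hexpc.measurable).const_mul _
    · exact Complex.measurable_ofReal.comp hBcont.measurable
  have hphicont : Continuous phi := by
    unfold phi; fun_prop
  have hmeasL : AEStronglyMeasurable
      (fun ξ : ℝ => (1 - ((phi ξ : ℝ) : ℂ) ^ 2) * v' ξ) volume := by
    apply Measurable.aestronglyMeasurable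
    apply Measurable.mul _ hv'meas
    exact measurable_const.sub
      ((Complex.measurable_ofReal.comp hphicont.measurable).pow_const 2)
  have hCb : ∀ ξ : ℝ, ‖(1 - ((phi ξ : ℝ) : ℂ) ^ 2) * v' ξ‖ ≤ (‖lam‖ + |c|) * ‖v ξ‖ := by
    intro ξ
    rw [hid2 ξ, norm_mul]
    apply mul_le_mul_of_nonneg_right _ (norm_nonneg _)
    rcases le_or_gt ξ 0 with hξ | hξ
    · rw [if_neg (not_lt.mpr hξ)]
      simp only [norm_zero]
      positivity
    · rw [if_pos hξ]
      calc ‖lam + (c:ℂ) * ((Real.exp (-(2*ξ)) : ℝ) : ℂ)‖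
          ≤ ‖lam‖ + ‖(c:ℂ) * ((Real.exp (-(2*ξ)) : ℝ) : ℂ)‖ := norm_add_le _ _
        _ ≤ ‖lam‖ + |c| := by
            rw [norm_mul]
            apply add_le_add_right _ ‖lam‖
            have h1 : ‖((Real.exp (-(2*ξ)) : ℝ) : ℂ)‖ ≤ 1 := by
              rw [Complex.norm_real, Real.norm_eq_abs,
                abs_of_pos (Real.exp_pos _)]
              exact Real.exp_le_one_iff.mpr (by linarith)
            have h2 : ‖((c:ℝ):ℂ)‖ = |c| := by
              rw [Complex.norm_real, Real.norm_eq_abs]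
            calc ‖((c:ℝ):ℂ)‖ * ‖((Real.exp (-(2*ξ)) : ℝ) : ℂ)‖ ≤ ‖((c:ℝ):ℂ)‖ * 1 :=
                  mul_le_mul_of_nonneg_left h1 (norm_nonneg _)
              _ = |c| := by rw [mul_one, h2]
  have hmem2 : MemLp (fun ξ : ℝ => (1 - ((phi ξ : ℝ) : ℂ) ^ 2) * v' ξ) 2
      (volume : Measure ℝ) :=
    hmem.of_le_mul hmeasL (Filter.Eventually.of_forall hCb)
  refine ⟨v, v', hmem, hne, ?_, hmem2, ?_⟩
  · intro ξ hξ
    rcases lt_or_gt_of_ne hξ with h | h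
    · have hxmem : Set.Iio (0:ℝ) ∈ nhds ξ := isOpen_Iio.mem_nhds h
      have heq : (fun _ : ℝ => (0:ℂ)) =ᶠ[nhds ξ] v := by
        filter_upwards [hxmem] with y hy
        simp [hv, not_lt.mpr (le_of_lt (Set.mem_Iio.mp hy))]
      have h0 : HasDerivAt (fun _ : ℝ => (0:ℂ)) 0 ξ := hasDerivAt_const ξ 0
      have hd : HasDerivAt v 0 ξ := h0.congr_of_eventuallyEq heq.symm
      have hv'0 : v' ξ = 0 := by rw [hv']; simp [not_lt.mpr h.le]
      rwa [hv'0]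
    · exact hderiv ξ h
  · intro ξ hξ
    rcases lt_or_gt_of_ne hξ with h | h
    · have hv0 : v ξ = 0 := by rw [hv]; simp [not_lt.mpr h.le]
      have hv'0 : v' ξ = 0 := by rw [hv']; simp [not_lt.mpr h.le]
      rw [hv0, hv'0]; simp
    · rw [hid2 ξ, if_pos h]
      have hphi' : phi' ξ = -Real.exp (-ξ) := by
        rw [phi', Real.sign_of_pos h, abs_of_pos h]; ring
      have hphiv : phi ξ = Real.exp (-ξ) := by rw [phi, abs_of_pos h]
      have hexp2 : Real.exp (-ξ) * Real.exp (-ξ) = Real.exp (-(2*ξ)) := by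
        rw [← Real.exp_add]; congr 1; ring
      have hco : (4 - b) * phi ξ * phi' ξ = -(c * Real.exp (-(2*ξ))) := by
        rw [hphiv, hphi', hc]
        linear_combination (-(4-b)) * hexp2
      rw [hco]
      push_cast
      ring

/-- for `b < 5` and `0 < |Re λ| < 5 - b`, the operator
`L₀ = (1-φ²)∂_ξ + (4-b)φφ'` on `L²(ℝ)` has `λ` as an eigenvalue: there is a nonzero
`v ∈ L²`, differentiable away from the origin, with `(1-φ²)v' ∈ L²`, satisfying the
eigenvalue equation for every `ξ ≠ 0`. -/
theorem point_spectrum_L0 (b : ℝ) (hb : b < 5) (lam : ℂ)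
    (h1 : 0 < |lam.re|) (h2 : |lam.re| < 5 - b) :
    ∃ v v' : ℝ → ℂ,
      MemLp v 2 (volume : Measure ℝ) ∧
      ¬ (v =ᵐ[(volume : Measure ℝ)] 0) ∧
      (∀ ξ : ℝ, ξ ≠ 0 → HasDerivAt v (v' ξ) ξ) ∧
      MemLp (fun ξ : ℝ => (1 - ((phi ξ : ℝ) : ℂ) ^ 2) * v' ξ) 2 (volume : Measure ℝ) ∧
      ∀ ξ : ℝ, ξ ≠ 0 →
        (1 - ((phi ξ : ℝ) : ℂ) ^ 2) * v' ξ
            + (((4 - b) * phi ξ * phi' ξ : ℝ) : ℂ) * v ξ = lam * v ξ := by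
  have hne0 : lam.re ≠ 0 := by
    intro h; rw [h] at h1; simp at h1
  rcases lt_or_gt_of_ne hne0 with hlt | hgt
  · have habs : |lam.re| = -lam.re := abs_of_neg hlt
    rw [habs] at h2
    exact core b lam hlt (by linarith)
  · have habs : |lam.re| = lam.re := abs_of_pos hgt
    rw [habs] at h2
    obtain ⟨v, v', hmem, hne, hderiv, hmem2, heqn⟩ :=
      core b (-lam) (by simp [Complex.neg_re]; linarith) (by simp [Complex.neg_re]; linarith)
    have hphin : ∀ ξ : ℝ, phi (-ξ) = phi ξ := fun ξ => by rw [phi, phi, abs_neg]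
    refine ⟨fun ξ => v (-ξ), fun ξ => -(v' (-ξ)), ?_, ?_, ?_, ?_, ?_⟩
    · exact hmem.comp_measurePreserving (Measure.measurePreserving_neg _)
    · intro hae
      apply hne
      have hmap : Measure.map (Neg.neg : ℝ → ℝ) volume = volume :=
        (Measure.measurePreserving_neg _).map_eq
      have h2' : (fun ξ : ℝ => v (-ξ)) =ᵐ[Measure.map (Neg.neg : ℝ → ℝ) volume] 0 := by
        rw [hmap]; exact hae
      have h3 := MeasureTheory.ae_eq_comp measurable_neg.aemeasurable h2'
      have h4 : ((fun ξ : ℝ => v (-ξ)) ∘ (Neg.neg : ℝ → ℝ)) = v := by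
        funext ξ; simp [Function.comp]
      rw [h4] at h3
      simpa using h3
    · intro ξ hξ
      have hd := hderiv (-ξ) (neg_ne_zero.mpr hξ)
      have hcomp := HasDerivAt.scomp ξ hd (hasDerivAt_neg ξ)
      simpa [Function.comp_def] using hcomp
    · have hfe : (fun ξ : ℝ => (1 - ((phi ξ : ℝ) : ℂ) ^ 2) * -(v' (-ξ)))
          = fun ξ : ℝ =>
            -(((fun x : ℝ => (1 - ((phi x : ℝ) : ℂ) ^ 2) * v' x) ∘ (Neg.neg : ℝ → ℝ)) ξ) := by
        funext ξ
        simp only [Function.comp_apply]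
        rw [hphin ξ]
        ring
      rw [hfe]
      exact (hmem2.comp_measurePreserving (Measure.measurePreserving_neg _)).neg
    · intro ξ hξ
      have hphin' : phi' (-ξ) = -phi' ξ := by
        rw [phi', phi', Real.sign_neg, abs_neg]; ring
      have hthis := heqn (-ξ) (neg_ne_zero.mpr hξ)
      rw [hphin ξ, hphin'] at hthis
      have hcast : (((4 - b) * phi ξ * (-phi' ξ) : ℝ) : ℂ)
          = -(((4 - b) * phi ξ * phi' ξ : ℝ) : ℂ) := by push_cast; ring
      rw [hcast] at hthis
      linear_combination -hthis
end

section
/- Let b ∈ ℝ and λ ∈ ℂ. Suppose v ∈ L²(ℝ,ℂ) is not identically zero, is locally absolutely continuous on ℝ∖{0}, and satisfies (1 − φ(ξ)²)·v'(ξ) + (4−b)·φ(ξ)·φ'(ξ)·v(ξ) = λ·v(ξ) for every ξ ≠ 0. Then 0 < |Re λ| < 5 − b (in particular b < 5). That is, the point spectrum of the operator L₀ = (1−φ²)∂_ξ + (4−b)φφ' on L²(ℝ) is contained in the region 0 < |Re λ| < 5−b. -/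
open MeasureTheory Complex

open Set in
lemma aux_not_integrable_const {f : ℝ → ℝ} {ε : ℝ} (hε : 0 < ε)
    (hf : IntegrableOn f (Ici (1:ℝ)) volume)
    (hbd : ∀ ξ ∈ Ici (1:ℝ), ε ≤ f ξ) : False := by
  have hconst : Integrable (fun _ : ℝ => ε) (volume.restrict (Ici 1)) := by
    refine hf.mono' aestronglyMeasurable_const ?_
    rw [ae_restrict_iff' measurableSet_Ici]
    exact MeasureTheory.ae_of_all _ fun ξ hξ => by
      rw [Real.norm_eq_abs, _root_.abs_of_pos hε]; exact hbd ξ hξ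
  rw [integrable_const_iff] at hconst
  rcases hconst with h | h
  · exact hε.ne' h
  · rw [isFiniteMeasure_iff, Measure.restrict_apply_univ] at h
    simp [Real.volume_Ici] at h

open Set in
lemma aux_not_integrable_inv {f : ℝ → ℝ} {c : ℝ} (hc : 0 < c)
    (hf : IntegrableOn f (Ioo (0:ℝ) 1) volume)
    (hbd : ∀ ξ ∈ Ioo (0:ℝ) 1, c * ξ⁻¹ ≤ f ξ) : False := by
  have h1 : Integrable (fun ξ : ℝ => c * ξ⁻¹) (volume.restrict (Ioo 0 1)) := by
    refine hf.mono' ((measurable_inv.const_mul c).aestronglyMeasurable) ?_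
    rw [ae_restrict_iff' measurableSet_Ioo]
    refine MeasureTheory.ae_of_all _ fun ξ hξ => ?_
    have h0 : (0:ℝ) < ξ := hξ.1
    rw [Real.norm_eq_abs, _root_.abs_of_nonneg (by positivity)]
    exact hbd ξ hξ
  have h2 : IntegrableOn (fun ξ : ℝ => ξ ^ (-1 : ℝ)) (Ioo (0:ℝ) 1) volume := by
    have h3 := h1.const_mul c⁻¹
    have heq : (fun ξ : ℝ => c⁻¹ * (c * ξ⁻¹)) = fun ξ : ℝ => ξ ^ (-1:ℝ) := by
      funext ξ
      rw [Real.rpow_neg_one]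
      field_simp
    rwa [heq] at h3
  have := (intervalIntegral.integrableOn_Ioo_rpow_iff zero_lt_one).mp h2
  linarith

lemma aux_alg (mu bc E : ℂ) (hE0 : E ≠ 0) (hE1 : E - 1 ≠ 0) :
    (1 - E⁻¹) * ((bc - 4) + (mu + 4 - bc) * E / (E - 1)) = mu + (4 - bc) * E⁻¹ := by
  field_simp
  ring

open Set in
lemma half_line {b : ℝ} {μ : ℂ} {v v' : ℝ → ℂ}
    (hint : IntegrableOn (fun ξ => ‖v ξ‖^2) (Ioi (0:ℝ)) volume)
    (hderiv : ∀ ξ ∈ Ioi (0:ℝ), HasDerivAt v (v' ξ) ξ)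
    (heq : ∀ ξ ∈ Ioi (0:ℝ),
      (1 - (Real.exp (-(2*ξ)) : ℂ)) * v' ξ = (μ + (4-b) * Real.exp (-(2*ξ))) * v ξ)
    (hx : ∃ ξ ∈ Ioi (0:ℝ), v ξ ≠ 0) :
    μ.re < 0 ∧ b - 5 < μ.re := by
  set r : ℝ := μ.re + 4 - b with hrdef
  obtain ⟨ξ₀, hξ₀, hv₀⟩ := hx
  have hE1 : ∀ ξ : ℝ, ξ ∈ Ioi (0:ℝ) → 1 < Real.exp (2*ξ) := fun ξ hξ =>
    Real.one_lt_exp_iff.mpr (by have := hξ.out; linarith)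
  have hE1c : ∀ ξ : ℝ, ξ ∈ Ioi (0:ℝ) → ((Real.exp (2*ξ) : ℝ) : ℂ) - 1 ≠ 0 := by
    intro ξ hξ
    have h := hE1 ξ hξ
    have hc : ((Real.exp (2*ξ) : ℝ) : ℂ) - 1 = ((Real.exp (2*ξ) - 1 : ℝ) : ℂ) := by
      push_cast; ring
    rw [hc, Complex.ofReal_ne_zero]
    linarith
  have hE0c : ∀ ξ : ℝ, ((Real.exp (2*ξ) : ℝ) : ℂ) ≠ 0 := fun ξ => by
    rw [Complex.ofReal_ne_zero]; exact (Real.exp_pos _).ne'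
  set F : ℝ → ℂ := fun ξ =>
    (((b-4)*ξ : ℝ) : ℂ) + (μ+4-b) * ((Real.log (Real.exp (2*ξ) - 1) / 2 : ℝ) : ℂ) with hFdef
  set G : ℝ → ℂ := fun ξ =>
    ((b:ℂ)-4) + (μ+4-b) * Real.exp (2*ξ) / ((Real.exp (2*ξ) : ℂ) - 1) with hGdef
  have hF : ∀ ξ ∈ Ioi (0:ℝ), HasDerivAt F (G ξ) ξ := by
    intro ξ hξ
    have hEpos : (0:ℝ) < Real.exp (2*ξ) - 1 := by linarith [hE1 ξ hξ]
    have h1 : HasDerivAt (fun x : ℝ => (b-4)*x) (b-4) ξ := by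
      simpa using (hasDerivAt_id ξ).const_mul (b-4)
    have h2 : HasDerivAt (fun x : ℝ => Real.exp (2*x) - 1) (Real.exp (2*ξ) * 2) ξ := by
      have h2' := ((hasDerivAt_id ξ).const_mul (2:ℝ)).exp
      simpa using h2'.sub_const 1
    have h3 : HasDerivAt (fun x : ℝ => Real.log (Real.exp (2*x) - 1) / 2)
        ((Real.exp (2*ξ) - 1)⁻¹ * (Real.exp (2*ξ) * 2) / 2) ξ :=
      by have := (Real.hasDerivAt_log hEpos.ne').comp ξ h2; exact this.div_const 2
    have h4 := (h1.ofReal_comp).add ((h3.ofReal_comp).const_mul (μ+4-b))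
    refine h4.congr_deriv ?_
    rw [hGdef]
    have hc : ((((Real.exp (2*ξ) - 1)⁻¹ * (Real.exp (2*ξ) * 2) / 2 : ℝ)) : ℂ)
        = (((Real.exp (2*ξ) : ℝ) : ℂ) - 1)⁻¹ * ((Real.exp (2*ξ) : ℝ) : ℂ) := by
      push_cast [-Complex.ofReal_exp]
      ring
    have hc2 : (((b-4 : ℝ)) : ℂ) = (b:ℂ) - 4 := by push_cast; ring
    rw [hc, hc2]
    ring
  have hvG : ∀ ξ ∈ Ioi (0:ℝ), v' ξ = G ξ * v ξ := by
    intro ξ hξ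
    have h := heq ξ hξ
    have hlt : Real.exp (-(2*ξ)) < 1 := Real.exp_lt_one_iff.mpr (by have := hξ.out; linarith)
    have hme : (1 : ℂ) - Real.exp (-(2*ξ)) ≠ 0 := by
      have hc : (1 : ℂ) - Real.exp (-(2*ξ)) = ((1 - Real.exp (-(2*ξ)) : ℝ) : ℂ) := by
        push_cast; ring
      rw [hc, Complex.ofReal_ne_zero]
      linarith
    apply mul_left_cancel₀ hme
    rw [h]
    have hkey : ((1:ℂ) - Real.exp (-(2*ξ))) * G ξ = μ + (4-b) * Real.exp (-(2*ξ)) := by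
      rw [hGdef]
      have hne1 : ((Real.exp (2*ξ) : ℝ) : ℂ) - 1 ≠ 0 := hE1c ξ hξ
      have hne0 : ((Real.exp (2*ξ) : ℝ) : ℂ) ≠ 0 := hE0c ξ
      have hinv : (Real.exp (-(2*ξ)) : ℂ) = ((Real.exp (2*ξ) : ℝ) : ℂ)⁻¹ := by
        rw [show -(2*ξ) = -(2*ξ) from rfl, Real.exp_neg]
        push_cast [-Complex.ofReal_exp]
        ring
      rw [hinv]
      exact aux_alg μ b _ hne0 hne1
    rw [← hkey]
    ring
  set w : ℝ → ℂ := fun ξ => v ξ * Complex.exp (-F ξ) with hwdef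
  have hw : ∀ ξ ∈ Ioi (0:ℝ), HasDerivAt w 0 ξ := by
    intro ξ hξ
    have h2 := ((hF ξ hξ).neg).cexp
    have h3 := (hderiv ξ hξ).mul h2
    refine h3.congr_deriv ?_
    rw [hvG ξ hξ]
    ring
  have hconst : ∀ ξ ∈ Ioi (0:ℝ), w ξ = w ξ₀ := by
    have key : ∀ x y : ℝ, 0 < x → x ≤ y → w y = w x := by
      intro x y hx0 hxy
      have hsub : Icc x y ⊆ Ioi (0:ℝ) := fun t ht => lt_of_lt_of_le hx0 ht.1
      have hcont : ContinuousOn w (Icc x y) := fun t ht =>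
        ((hw t (hsub ht)).continuousAt).continuousWithinAt
      have hder : ∀ t ∈ Ico x y, HasDerivWithinAt w 0 (Ici t) t := fun t ht =>
        (hw t (hsub ⟨ht.1, ht.2.le⟩)).hasDerivWithinAt
      exact constant_of_has_deriv_right_zero hcont hder y (right_mem_Icc.mpr hxy)
    intro ξ hξ
    rcases le_total ξ ξ₀ with h | h
    · exact (key ξ ξ₀ hξ.out h).symm
    · exact key ξ₀ ξ hξ₀.out h
  set C : ℂ := w ξ₀ with hCdef
  have hC0 : C ≠ 0 := mul_ne_zero hv₀ (Complex.exp_ne_zero _)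
  have hform : ∀ ξ ∈ Ioi (0:ℝ), v ξ = C * Complex.exp (F ξ) := by
    intro ξ hξ
    have h := hconst ξ hξ
    have h2 := congrArg (fun z => z * Complex.exp (F ξ)) h
    simpa [hwdef, mul_assoc, ← Complex.exp_add] using h2
  have hCnorm : (0:ℝ) < ‖C‖^2 := pow_pos (norm_pos_iff.mpr hC0) 2
  have hnorm : ∀ ξ ∈ Ioi (0:ℝ),
      ‖v ξ‖^2 = ‖C‖^2 * (Real.exp (2*(b-4)*ξ) * (Real.exp (2*ξ) - 1) ^ r) := by
    intro ξ hξ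
    have hEpos : (0:ℝ) < Real.exp (2*ξ) - 1 := by linarith [hE1 ξ hξ]
    rw [hform ξ hξ, norm_mul, Complex.norm_exp]
    have hre : (F ξ).re = (b-4)*ξ + r * (Real.log (Real.exp (2*ξ) - 1) / 2) := by
      rw [hFdef]
      simp [Complex.add_re, Complex.mul_re, Complex.ofReal_re, Complex.ofReal_im,
        Complex.add_im, Complex.sub_re, Complex.sub_im, hrdef]
    rw [hre, mul_pow]
    congr 1
    rw [Real.rpow_def_of_pos hEpos, pow_two, ← Real.exp_add, ← Real.exp_add]
    congr 1
    ring
  have hA : μ.re < 0 := by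
    by_contra hs
    push_neg at hs
    set ε : ℝ := min ((1 - Real.exp (-2:ℝ)) ^ r) 1 with hεdef
    have h2pos : (0:ℝ) < 1 - Real.exp (-2:ℝ) := by
      have : Real.exp (-2:ℝ) < 1 := Real.exp_lt_one_iff.mpr (by norm_num)
      linarith
    have hεpos : 0 < ε := lt_min (Real.rpow_pos_of_pos h2pos r) one_pos
    have hbd : ∀ ξ ∈ Ici (1:ℝ), ‖C‖^2 * ε ≤ ‖v ξ‖^2 := by
      intro ξ hξ
      have h1ξ : (1:ℝ) ≤ ξ := hξ
      have hξ0 : ξ ∈ Ioi (0:ℝ) := lt_of_lt_of_le one_pos h1ξ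
      rw [hnorm ξ hξ0]
      have hlt : Real.exp (-(2*ξ)) < 1 := Real.exp_lt_one_iff.mpr (by linarith)
      have hpos' : (0:ℝ) < 1 - Real.exp (-(2*ξ)) := by linarith
      have hfac : Real.exp (2*ξ) - 1 = Real.exp (2*ξ) * (1 - Real.exp (-(2*ξ))) := by
        have hx := (Real.exp_pos (2*ξ)).ne'
        rw [Real.exp_neg]
        field_simp
      have hsplit : (Real.exp (2*ξ) - 1) ^ r
          = Real.exp (2*ξ*r) * (1 - Real.exp (-(2*ξ))) ^ r := by
        rw [hfac, Real.mul_rpow (Real.exp_pos _).le hpos'.le]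
        congr 1
        rw [Real.rpow_def_of_pos (Real.exp_pos _), Real.log_exp]
      have hcomb : 2*(b-4)*ξ + 2*ξ*r = 2*ξ*μ.re := by rw [hrdef]; ring
      have h1le : (1:ℝ) ≤ Real.exp (2*ξ*μ.re) := by
        have h0 : (0:ℝ) ≤ 2*ξ*μ.re := by
          have : (0:ℝ) ≤ ξ := by linarith
          positivity
        linarith [Real.add_one_le_exp (2*ξ*μ.re)]
      have hemono : Real.exp (-(2*ξ)) ≤ Real.exp (-2:ℝ) :=
        Real.exp_le_exp.mpr (by linarith)
      have h2le : ε ≤ (1 - Real.exp (-(2*ξ))) ^ r := by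
        rcases le_or_gt 0 r with hr0 | hr0
        · exact le_trans (min_le_left _ _)
            (Real.rpow_le_rpow h2pos.le (by linarith) hr0)
        · exact le_trans (min_le_right _ _)
            (Real.one_le_rpow_of_pos_of_le_one_of_nonpos hpos'
              (by linarith [Real.exp_pos (-(2*ξ))]) hr0.le)
      have e1 : Real.exp (2*(b-4)*ξ) * (Real.exp (2*ξ) - 1)^r
          = Real.exp (2*ξ*μ.re) * (1 - Real.exp (-(2*ξ)))^r := by
        rw [hsplit, ← mul_assoc, ← Real.exp_add, hcomb]
      have hineq : ε ≤ Real.exp (2*(b-4)*ξ) * (Real.exp (2*ξ) - 1)^r := by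
        rw [e1]
        calc ε ≤ (1 - Real.exp (-(2*ξ)))^r := h2le
          _ ≤ _ := le_mul_of_one_le_left (Real.rpow_nonneg hpos'.le r) h1le
      exact mul_le_mul_of_nonneg_left hineq hCnorm.le
    exact aux_not_integrable_const (mul_pos hCnorm hεpos)
      (hint.mono_set (fun t ht => show (0:ℝ) < t from lt_of_lt_of_le one_pos ht)) hbd
  have hB : b - 5 < μ.re := by
    by_contra hs
    push_neg at hs
    have hrle : r ≤ -1 := by rw [hrdef]; linarith
    set c : ℝ := ‖C‖^2 * (Real.exp (-(2*|b-4|)) * (2*Real.exp 2) ^ r) with hcdef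
    have hcpos : 0 < c := by
      refine mul_pos hCnorm (mul_pos (Real.exp_pos _) ?_)
      exact Real.rpow_pos_of_pos (by positivity) r
    have hbd : ∀ ξ ∈ Ioo (0:ℝ) 1, c * ξ⁻¹ ≤ ‖v ξ‖^2 := by
      intro ξ hξ
      obtain ⟨h0, h1⟩ := hξ
      rw [hnorm ξ h0]
      have hEpos : (0:ℝ) < Real.exp (2*ξ) - 1 := by linarith [hE1 ξ h0]
      have hexp_le : Real.exp (2*ξ) ≤ Real.exp 2 := Real.exp_le_exp.mpr (by linarith)
      have hup : Real.exp (2*ξ) - 1 ≤ (2*Real.exp 2) * ξ := by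
        have h2 := Real.add_one_le_exp (-(2*ξ))
        have h3 : Real.exp (-(2*ξ)) * Real.exp (2*ξ) = 1 := by
          rw [← Real.exp_add]; simp
        nlinarith [Real.exp_pos (2*ξ)]
      have hstep1 : ((2*Real.exp 2) * ξ) ^ r ≤ (Real.exp (2*ξ) - 1) ^ r :=
        Real.rpow_le_rpow_of_nonpos hEpos hup (by linarith)
      have hstep2 : ((2*Real.exp 2) * ξ) ^ r = (2*Real.exp 2)^r * ξ ^ r :=
        Real.mul_rpow (by positivity) h0.le
      have hstep3 : ξ ^ (-1:ℝ) ≤ ξ ^ r := Real.rpow_le_rpow_of_exponent_ge h0 h1.le hrle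
      have hstep4 : Real.exp (-(2*|b-4|)) ≤ Real.exp (2*(b-4)*ξ) := by
        apply Real.exp_le_exp.mpr
        nlinarith [neg_abs_le (b-4), abs_nonneg (b-4)]
      rw [Real.rpow_neg_one] at hstep3
      have hx1 : (2*Real.exp 2)^r * ξ⁻¹ ≤ (Real.exp (2*ξ)-1)^r := by
        calc (2*Real.exp 2)^r * ξ⁻¹ ≤ (2*Real.exp 2)^r * ξ^r :=
              mul_le_mul_of_nonneg_left hstep3 (Real.rpow_nonneg (by positivity) r)
          _ = ((2*Real.exp 2) * ξ) ^ r := hstep2.symm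
          _ ≤ _ := hstep1
      calc c * ξ⁻¹ = ‖C‖^2 * (Real.exp (-(2*|b-4|)) * ((2*Real.exp 2)^r * ξ⁻¹)) := by
            rw [hcdef]; ring
        _ ≤ ‖C‖^2 * (Real.exp (-(2*|b-4|)) * (Real.exp (2*ξ)-1)^r) := by
            refine mul_le_mul_of_nonneg_left ?_ hCnorm.le
            exact mul_le_mul_of_nonneg_left hx1 (Real.exp_pos _).le
        _ ≤ ‖C‖^2 * (Real.exp (2*(b-4)*ξ) * (Real.exp (2*ξ) - 1)^r) := by
            refine mul_le_mul_of_nonneg_left ?_ hCnorm.le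
            exact mul_le_mul_of_nonneg_right hstep4 (Real.rpow_nonneg hEpos.le r)
    exact aux_not_integrable_inv hcpos (hint.mono_set (fun t ht => ht.1)) hbd
  exact ⟨hA, hB⟩

open Set in
/-- any `L²` eigenvalue of `L₀ = (1-φ²)∂_ξ + (4-b)φφ'` satisfies
`0 < |Re λ| < 5 - b`. -/
theorem point_spectrum_L0_location (b : ℝ) (lam : ℂ) (v v' : ℝ → ℂ)
    (hv : MemLp v 2 (volume : Measure ℝ))
    (hne : ¬ (v =ᵐ[(volume : Measure ℝ)] 0))
    (hderiv : ∀ ξ : ℝ, ξ ≠ 0 → HasDerivAt v (v' ξ) ξ)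
    (heq : ∀ ξ : ℝ, ξ ≠ 0 →
      (1 - ((phi ξ : ℝ) : ℂ) ^ 2) * v' ξ
          + (((4 - b) * phi ξ * phi' ξ : ℝ) : ℂ) * v ξ = lam * v ξ) :
    0 < |lam.re| ∧ |lam.re| < 5 - b := by
  have hInt : Integrable (fun ξ => ‖v ξ‖^2) (volume : Measure ℝ) := by
    have h := hv.integrable_norm_rpow two_ne_zero ENNReal.ofNat_ne_top
    have h2 : (fun x => ‖v x‖ ^ (2:ENNReal).toReal) = fun x => ‖v x‖^2 := by
      funext x
      have h3 : ((2:ENNReal)).toReal = ((2:ℕ):ℝ) := by simp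
      rw [h3, Real.rpow_natCast]
    rwa [h2] at h
  have hphi_pos : ∀ ξ : ℝ, 0 < ξ → phi ξ = Real.exp (-ξ) := fun ξ h => by
    rw [phi, abs_of_pos h]
  have hphi'_pos : ∀ ξ : ℝ, 0 < ξ → phi' ξ = -Real.exp (-ξ) := fun ξ h => by
    rw [phi', Real.sign_of_pos h, abs_of_pos h]; ring
  have hphi_neg : ∀ ξ : ℝ, ξ < 0 → phi ξ = Real.exp ξ := fun ξ h => by
    rw [phi, abs_of_neg h]; ring_nf
  have hphi'_neg : ∀ ξ : ℝ, ξ < 0 → phi' ξ = Real.exp ξ := fun ξ h => by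
    rw [phi', Real.sign_of_neg h, abs_of_neg h]; ring_nf
  by_cases hp : ∃ ξ ∈ Ioi (0:ℝ), v ξ ≠ 0
  · have hpos : ∀ ξ ∈ Ioi (0:ℝ),
        (1 - (Real.exp (-(2*ξ)) : ℂ)) * v' ξ = (lam + (4-b) * Real.exp (-(2*ξ))) * v ξ := by
      intro ξ hξ
      have h0 : (0:ℝ) < ξ := hξ
      have h := heq ξ (ne_of_gt h0)
      rw [hphi_pos ξ h0, hphi'_pos ξ h0] at h
      have hsq : Real.exp (-(2*ξ)) = Real.exp (-ξ) * Real.exp (-ξ) := by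
        rw [← Real.exp_add]; ring_nf
      rw [hsq]
      push_cast at h ⊢
      linear_combination h
    obtain ⟨hA, hB⟩ := half_line (hInt.integrableOn)
      (fun ξ hξ => hderiv ξ (ne_of_gt hξ)) hpos hp
    rw [abs_of_neg hA]
    exact ⟨by linarith, by linarith⟩
  · by_cases hn : ∃ ξ ∈ Iio (0:ℝ), v ξ ≠ 0
    · obtain ⟨η, hη, hvη⟩ := hn
      have hη0 : η < 0 := hη
      have hint_u : IntegrableOn (fun ξ => ‖v (-ξ)‖^2) (Ioi (0:ℝ)) volume :=
        (hInt.comp_neg).integrableOn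
      have hderiv_u : ∀ ξ ∈ Ioi (0:ℝ), HasDerivAt (fun x => v (-x)) (-v' (-ξ)) ξ := by
        intro ξ hξ
        have h0 : (0:ℝ) < ξ := hξ
        have hne' : (-ξ : ℝ) ≠ 0 := by intro hcon; rw [neg_eq_zero] at hcon; exact h0.ne' hcon
        have h := HasDerivAt.scomp (g₁ := v) (h := fun x : ℝ => -x) ξ (hderiv (-ξ) hne') (hasDerivAt_neg ξ)
        exact h.congr_deriv (by simp)
      have heq_u : ∀ ξ ∈ Ioi (0:ℝ),
          (1 - (Real.exp (-(2*ξ)) : ℂ)) * (-v' (-ξ))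
            = (-lam + (4-b) * Real.exp (-(2*ξ))) * (v (-ξ)) := by
        intro ξ hξ
        have h0 : (0:ℝ) < ξ := hξ
        have hne' : (-ξ : ℝ) ≠ 0 := by intro hcon; rw [neg_eq_zero] at hcon; exact h0.ne' hcon
        have h := heq (-ξ) hne'
        rw [hphi_neg (-ξ) (by linarith), hphi'_neg (-ξ) (by linarith)] at h
        have hsq : Real.exp (-(2*ξ)) = Real.exp (-ξ) * Real.exp (-ξ) := by
          rw [← Real.exp_add]; ring_nf
        rw [hsq]
        push_cast at h ⊢
        linear_combination -h
      have hx_u : ∃ ξ ∈ Ioi (0:ℝ), v (-ξ) ≠ 0 := by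
        refine ⟨-η, by simpa using hη0, by rwa [neg_neg]⟩
      obtain ⟨hA, hB⟩ := half_line (μ := -lam) hint_u hderiv_u heq_u hx_u
      rw [Complex.neg_re] at hA hB
      rw [abs_of_pos (by linarith)]
      exact ⟨by linarith, by linarith⟩
    · exfalso
      apply hne
      push_neg at hp hn
      have hsub : {ξ : ℝ | ¬ v ξ = 0} ⊆ ({0} : Set ℝ) := by
        intro ξ hξ
        simp only [mem_setOf_eq] at hξ
        by_contra hcon
        simp only [mem_singleton_iff] at hcon
        rcases lt_or_gt_of_ne hcon with h | h
        · exact hξ (hn ξ h)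
        · exact hξ (hp ξ h)
      rw [Filter.EventuallyEq, ae_iff]
      exact measure_mono_null hsub (by simp)
end
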